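/- arXiv:1706.04858 — 9 statements merged into one kernel-verified Lean document; each statement's English description precedes it below -/
import Mathlib

section
/- Let M be a local Moufang set and let x,y ∈ X with x ≁ y. Then the two root groups U_x and U_y generate the whole little projective group: ⟨U_x, U_y⟩ = G. -/
/-!
Local Moufang sets, following E. Rijcken, "Local Moufang sets".
A local Moufang set is a set `X` with an equivalence relation (a `Setoid`)
having more than 2 classes, together with root groups `U x` of
equivalence-preserving permutations, satisfying (LM0), (LM1), (LM1'), (LM2).
We use left actions; the paper's right-composition word `a₁a₂⋯aₙ` corresponds
to our product `aₙ * ⋯ * a₁`, and the paper's conjugation `g^h = h⁻¹gh`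
corresponds to `h * g * h⁻¹` (i.e. `MulAut.conj h g`).
-/

variable {X : Type*}

/-- A permutation of `X` preserves the equivalence relation `r`. -/
def PreservesRel (r : Setoid X) (g : Equiv.Perm X) : Prop :=
  ∀ a b : X, r.r a b ↔ r.r (g a) (g b)

/-- A local pre-Moufang set: axioms (LM0), (LM1), (LM1'). -/
structure IsLocalPreMoufangSet (r : Setoid X) (U : X → Subgroup (Equiv.Perm X)) : Prop where
  /-- `X` has more than two equivalence classes. -/
  big : ∃ a b c : X, ¬ r.r a b ∧ ¬ r.r a c ∧ ¬ r.r b c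
  /-- root groups consist of equivalence-preserving permutations -/
  preserves : ∀ x : X, ∀ g ∈ U x, PreservesRel r g
  /-- (LM0): if `x ∼ y` then the induced actions of `U x` and `U y` on the quotient agree -/
  lm0 : ∀ x y : X, r.r x y → ∀ g ∈ U x, ∃ h ∈ U y, ∀ a : X, r.r (g a) (h a)
  /-- (LM1): `U x` fixes `x` ... -/
  fixes : ∀ x : X, ∀ g ∈ U x, g x = x
  /-- (LM1): ... and acts sharply transitively on the complement of the class of `x` -/
  lm1 : ∀ x a b : X, ¬ r.r a x → ¬ r.r b x → ∃! g : Equiv.Perm X, g ∈ U x ∧ g a = b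
  /-- (LM1'): the induced action on the quotient is transitive away from the class of `x` ... -/
  lm1'_trans : ∀ x a b : X, ¬ r.r a x → ¬ r.r b x → ∃ g ∈ U x, r.r (g a) b
  /-- (LM1'): ... and sharply so -/
  lm1'_sharp : ∀ x : X, ∀ g ∈ U x, ∀ h ∈ U x, ∀ a : X, ¬ r.r a x →
    r.r (g a) (h a) → ∀ b : X, r.r (g b) (h b)

/-- A local Moufang set: a local pre-Moufang set satisfying (LM2). -/
structure IsLocalMoufangSet (r : Setoid X) (U : X → Subgroup (Equiv.Perm X))
    extends IsLocalPreMoufangSet r U : Prop where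
  /-- (LM2): `U x ^ g = U (x g)` for all `g` in the little projective group `⟨U y : y⟩` -/
  lm2 : ∀ x : X, ∀ g ∈ (⨆ y : X, U y), (U x).map (MulAut.conj g).toMonoidHom = U (g x)

/-- two root groups at non-equivalent points generate the whole
little projective group. -/
theorem statement1 (r : Setoid X) (U : X → Subgroup (Equiv.Perm X))
    (h : IsLocalMoufangSet r U) (x y : X) (hxy : ¬ r.r x y) :
    U x ⊔ U y = ⨆ z : X, U z := by
  apply le_antisymm
  · exact sup_le (le_iSup U x) (le_iSup U y)
  · refine iSup_le fun z => ?_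
    by_cases hz : r.r z x
    · have hzy : ¬ r.r z y := fun hzy => hxy (r.trans (r.symm hz) hzy)
      obtain ⟨g, ⟨hg, hgx⟩, -⟩ := h.lm1 y x z hxy hzy
      have hgG : g ∈ ⨆ w, U w := (le_iSup U y) hg
      have key := h.lm2 x g hgG
      rw [hgx] at key
      rw [← key]
      rintro u ⟨v, hv, rfl⟩
      simp only [MulEquiv.coe_toMonoidHom, MulAut.conj_apply]
      exact mul_mem (mul_mem (SetLike.le_def.mp le_sup_right hg)
        (SetLike.le_def.mp le_sup_left hv)) (inv_mem (SetLike.le_def.mp le_sup_right hg))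
    · have hyx : ¬ r.r y x := fun h' => hxy (r.symm h')
      obtain ⟨g, ⟨hg, hgy⟩, -⟩ := h.lm1 x y z hyx hz
      have hgG : g ∈ ⨆ w, U w := (le_iSup U x) hg
      have key := h.lm2 y g hgG
      rw [hgy] at key
      rw [← key]
      rintro u ⟨v, hv, rfl⟩
      simp only [MulEquiv.coe_toMonoidHom, MulAut.conj_apply]
      exact mul_mem (mul_mem (SetLike.le_def.mp le_sup_left hg)
        (SetLike.le_def.mp le_sup_right hv)) (inv_mem (SetLike.le_def.mp le_sup_left hg))
end

section
/- Let M be a local Moufang set. Then the little projective group G acts transitively on the set of pairs {(x,y) ∈ X² : x ≁ y}. -/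
/-!
Local Moufang sets, following E. Rijcken, "Local Moufang sets".
A local Moufang set is a set `X` with an equivalence relation (a `Setoid`)
having more than 2 classes, together with root groups `U x` of
equivalence-preserving permutations, satisfying (LM0), (LM1), (LM1'), (LM2).
We use left actions; the paper's right-composition word `a₁a₂⋯aₙ` corresponds
to our product `aₙ * ⋯ * a₁`, and the paper's conjugation `g^h = h⁻¹gh`
corresponds to `h * g * h⁻¹` (i.e. `MulAut.conj h g`).
-/

variable {X : Type*}

/-- the little projective group acts transitively on pairs of
non-equivalent points. -/
theorem statement2 (r : Setoid X) (U : X → Subgroup (Equiv.Perm X))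
    (h : IsLocalMoufangSet r U) (x y x' y' : X)
    (hxy : ¬ r.r x y) (hxy' : ¬ r.r x' y') :
    ∃ g ∈ (⨆ z : X, U z), g x = x' ∧ g y = y' := by
  obtain ⟨a, b, c, hab, hac, hbc⟩ := h.big
  -- find z not equivalent to x and not to x'
  have key : ∃ z : X, ¬ r.r z x ∧ ¬ r.r z x' := by
    by_contra hcon
    push_neg at hcon
    by_cases h1 : r.r a x
    · have hb : ¬ r.r b x := fun hb => hab (r.trans h1 (r.symm hb))
      have hc : ¬ r.r c x := fun hc => hac (r.trans h1 (r.symm hc))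
      exact hbc (r.trans (hcon b hb) (r.symm (hcon c hc)))
    · by_cases h2 : r.r b x
      · have hc : ¬ r.r c x := fun hc => hbc (r.trans h2 (r.symm hc))
        exact hac (r.trans (hcon a h1) (r.symm (hcon c hc)))
      · exact hab (r.trans (hcon a h1) (r.symm (hcon b h2)))
  obtain ⟨z, hzx, hzx'⟩ := key
  obtain ⟨u, ⟨huU, hu⟩, -⟩ :=
    h.lm1 x y z (fun hh => hxy (r.symm hh)) hzx
  obtain ⟨v, ⟨hvU, hv⟩, -⟩ :=
    h.lm1 z x x' (fun hh => hzx (r.symm hh)) (fun hh => hzx' (r.symm hh))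
  obtain ⟨w, ⟨hwU, hw⟩, -⟩ :=
    h.lm1 x' z y' hzx' (fun hh => hxy' (r.symm hh))
  refine ⟨w * v * u, ?_, ?_, ?_⟩
  · exact mul_mem (mul_mem ((le_iSup U x') hwU) ((le_iSup U z) hvU)) ((le_iSup U x) huU)
  · simp only [Equiv.Perm.coe_mul, Function.comp_apply]
    rw [h.fixes x u huU, hv, h.fixes x' w hwU]
  · simp only [Equiv.Perm.coe_mul, Function.comp_apply]
    rw [hu, h.fixes z v hvU, hw]
end

section
/- Let M be a local Moufang set with fixed basis (0,∞), and let x ≁ ∞. Then the following are equivalent: (i) x is a unit (i.e. x ≁ 0 and x ≁ ∞); (ii) the induced permutation of α_x on the quotient X̄ does not fix the class of 0; (iii) the induced permutation of α_x does not fix any element of X̄ other than the class of ∞. -/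
/-!
Local Moufang sets, following E. Rijcken, "Local Moufang sets".
A local Moufang set is a set `X` with an equivalence relation (a `Setoid`)
having more than 2 classes, together with root groups `U x` of
equivalence-preserving permutations, satisfying (LM0), (LM1), (LM1'), (LM2).
We use left actions; the paper's right-composition word `a₁a₂⋯aₙ` corresponds
to our product `aₙ * ⋯ * a₁`, and the paper's conjugation `g^h = h⁻¹gh`
corresponds to `h * g * h⁻¹` (i.e. `MulAut.conj h g`).
-/

variable {X : Type*}

/-- characterizations of units.  Here `(o, i)` is the basis `(0,∞)`,
and `a = α_x` is the unique element of `U ∞` with `0 · α_x = x`.  The point `x` is a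
unit (`x ≁ 0`, given `x ≁ ∞`) iff the induced permutation of `α_x` on the quotient
does not fix the class of `0`, iff it fixes no class other than the class of `∞`. -/
theorem statement3 (r : Setoid X) (U : X → Subgroup (Equiv.Perm X))
    (h : IsLocalMoufangSet r U) (o i : X) (hoi : ¬ r.r o i)
    (x : X) (hx : ¬ r.r x i) (a : Equiv.Perm X) (haU : a ∈ U i) (hao : a o = x) :
    (¬ r.r x o ↔ ¬ r.r (a o) o) ∧
    (¬ r.r x o ↔ ∀ b : X, ¬ r.r b i → ¬ r.r (a b) b) := by
  subst hao
  refine ⟨Iff.rfl, ⟨fun hxo b hb hab => ?_, fun H => H o hoi⟩⟩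
  exact hxo (h.lm1'_sharp i a haU 1 (Subgroup.one_mem _) b hb hab o)
end

section
/- Let M be a local pre-Moufang set (axioms (LM0),(LM1),(LM1') hold) with fixed basis (0,∞), and let x be a unit. Then there exists a unique element μ_x in the double coset U_0·α_x·U_0 such that 0μ_x = ∞ and ∞μ_x = 0; moreover μ_x = g·α_x·h where g is the unique element of U_0 mapping ∞ to −x and h is the unique element of U_0 mapping x to ∞, and g,h ∈ U_0^×. -/
/-!
Local Moufang sets, following E. Rijcken, "Local Moufang sets".
A local Moufang set is a set `X` with an equivalence relation (a `Setoid`)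
having more than 2 classes, together with root groups `U x` of
equivalence-preserving permutations, satisfying (LM0), (LM1), (LM1'), (LM2).
We use left actions; the paper's right-composition word `a₁a₂⋯aₙ` corresponds
to our product `aₙ * ⋯ * a₁`, and the paper's conjugation `g^h = h⁻¹gh`
corresponds to `h * g * h⁻¹` (i.e. `MulAut.conj h g`).
-/

variable {X : Type*}

/-- existence and uniqueness of μ-maps in a local pre-Moufang set.
Here `(o, i)` is the basis `(0,∞)`, `x` is a unit and `a = α_x ∈ U ∞` is the unique
element with `0 · α_x = x`; note `-x = 0 · α_x⁻¹ = a⁻¹ o`.  There is a unique element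
`μ_x` of the double coset `U 0 · α_x · U 0` interchanging `0` and `∞`; moreover for
`g ∈ U 0` the unique element with `∞ · g = -x` and `h ∈ U 0` the unique element with
`x · h = ∞`, the permutation "first `g`, then `α_x`, then `h`" (our `h * a * g`)
swaps `0` and `∞`, and `g, h ∈ U 0 ^×` (their induced action on the quotient is
nontrivial). -/
theorem statement4 (r : Setoid X) (U : X → Subgroup (Equiv.Perm X))
    (hM : IsLocalPreMoufangSet r U) (o i : X) (hoi : ¬ r.r o i)
    (x : X) (hxo : ¬ r.r x o) (hxi : ¬ r.r x i)
    (a : Equiv.Perm X) (haU : a ∈ U i) (hao : a o = x) :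
    (∃! μ : Equiv.Perm X,
      (∃ u ∈ U o, ∃ v ∈ U o, μ = u * a * v) ∧ μ o = i ∧ μ i = o) ∧
    (∀ g ∈ U o, g i = a⁻¹ o → ∀ h ∈ U o, h x = i →
      (h * a * g) o = i ∧ (h * a * g) i = o ∧
      (∃ b : X, ¬ r.r (g b) b) ∧ (∃ b : X, ¬ r.r (h b) b)) := by
  
  have hio : ¬ r.r i o := fun h => hoi (r.symm h)
  have hox : ¬ r.r o x := fun h => hxo (r.symm h)
  have hix : ¬ r.r i x := fun h => hxi (r.symm h)
  have hai : a i = i := hM.fixes i a haU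
  have hpres := hM.preserves i a haU
  have hainvo : ¬ r.r (a⁻¹ o) o := fun h =>
    hox (by simpa [hao] using (hpres (a⁻¹ o) o).mp h)
  have hainvi : ¬ r.r (a⁻¹ o) i := fun h =>
    hoi (by simpa [hai] using (hpres (a⁻¹ o) i).mp h)
  obtain ⟨g₀, ⟨hg₀U, hg₀⟩, hg₀u⟩ := hM.lm1 o i (a⁻¹ o) hio hainvo
  obtain ⟨h₀, ⟨hh₀U, hh₀⟩, hh₀u⟩ := hM.lm1 o x i hxo hio
  constructor
  · refine ⟨h₀ * a * g₀, ⟨⟨h₀, hh₀U, g₀, hg₀U, rfl⟩, ?_, ?_⟩, ?_⟩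
    · simp [Equiv.Perm.mul_apply, hM.fixes o g₀ hg₀U, hao, hh₀]
    · simp [Equiv.Perm.mul_apply, hg₀, hM.fixes o h₀ hh₀U]
    · rintro μ ⟨⟨u, huU, v, hvU, rfl⟩, hμo, hμi⟩
      have hvo : v o = o := hM.fixes o v hvU
      have huo : u o = o := hM.fixes o u huU
      have hux : u x = i := by
        simpa [Equiv.Perm.mul_apply, hvo, hao] using hμo
      have hu : u = h₀ := hh₀u u ⟨huU, hux⟩
      have h1 : u (a (v i)) = o := hμi
      have huo' : u⁻¹ o = o := by
        conv_lhs => rw [← huo]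
        simp
      have h2 : a (v i) = o := by
        have := congrArg (⇑u⁻¹) h1
        simpa [huo'] using this
      have h3 : v i = a⁻¹ o := by
        have := congrArg (⇑a⁻¹) h2
        simpa using this
      have hv : v = g₀ := hg₀u v ⟨hvU, h3⟩
      rw [hu, hv]
  · intro g hgU hgi h hhU hhx
    refine ⟨?_, ?_, ⟨i, ?_⟩, ⟨x, ?_⟩⟩
    · simp [Equiv.Perm.mul_apply, hM.fixes o g hgU, hao, hhx]
    · simp [Equiv.Perm.mul_apply, hgi, hM.fixes o h hhU]
    · rw [hgi]; exact hainvi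
    · rw [hhx]; exact hix
end

section
/- Let M be a local Moufang set with basis (0,∞) and fixed μ-map τ, and let x be a unit. Then μ_{xτ} = μ_{−x}^τ (conjugation), i.e. the μ-map of the image xτ equals the conjugate by τ of the inverse μ-map μ_x^{-1} = μ_{−x}. -/
/-!
Local Moufang sets, following E. Rijcken, "Local Moufang sets".
A local Moufang set is a set `X` with an equivalence relation (a `Setoid`)
having more than 2 classes, together with root groups `U x` of
equivalence-preserving permutations, satisfying (LM0), (LM1), (LM1'), (LM2).
We use left actions; the paper's right-composition word `a₁a₂⋯aₙ` corresponds
to our product `aₙ * ⋯ * a₁`, and the paper's conjugation `g^h = h⁻¹gh`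
corresponds to `h * g * h⁻¹` (i.e. `MulAut.conj h g`).
-/

variable {X : Type*}

/-- `μ` is the μ-map of the point `x` w.r.t. the basis `(o, i) = (0, ∞)`:
it lies in the double coset `U 0 · α_x · U 0` (where `α_x` is the unique element
of `U ∞` with `0 · α_x = x`) and interchanges `0` and `∞`. -/
def IsMuMap (U : X → Subgroup (Equiv.Perm X)) (o i x : X) (μ : Equiv.Perm X) : Prop :=
  ∃ a : Equiv.Perm X, a ∈ U i ∧ a o = x ∧
    (∃ u ∈ U o, ∃ v ∈ U o, μ = u * a * v) ∧ μ o = i ∧ μ i = o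

/-- The Hua subgroup `H = ⟨μ_x μ_y : x, y units⟩` w.r.t. the basis `(o, i) = (0, ∞)`. -/
def HuaSubgroup (r : Setoid X) (U : X → Subgroup (Equiv.Perm X)) (o i : X) :
    Subgroup (Equiv.Perm X) :=
  Subgroup.closure {g | ∃ x y μx μy, (¬ r.r x o ∧ ¬ r.r x i) ∧ (¬ r.r y o ∧ ¬ r.r y i) ∧
    IsMuMap U o i x μx ∧ IsMuMap U o i y μy ∧ g = μx * μy}

/-!
A μ-map of a unit `x` is unique: writing `μ = u * a * v` with `u, v ∈ U 0` and `a ∈ U ∞`, the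
factor `a = α_x` is fixed by `a 0 = x`, and `μ 0 = ∞`, `μ ∞ = 0` pin down `u` and `v` by sharp
transitivity. So it suffices to see that `μ⁻¹ = v⁻¹ * a⁻¹ * u⁻¹` is a μ-map of `-x = a⁻¹ 0` and
that `τ * μ⁻¹ * τ⁻¹` is a μ-map of `τ x`. For the latter, `μ⁻¹ = a⁻¹ * u⁻¹ * c` with
`c = (u * a) * v⁻¹ * (u * a)⁻¹ ∈ U ((u * a) 0) = U ∞` by (LM2), so `μ⁻¹ ∈ U ∞ · U 0 · U ∞`,
which conjugation by `τ` carries to `U 0 · U ∞ · U 0`.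
-/

variable {r : Setoid X} {U : X → Subgroup (Equiv.Perm X)}

theorem PreservesRel.mul {f g : Equiv.Perm X} (hf : PreservesRel r f) (hg : PreservesRel r g) :
    PreservesRel r (f * g) :=
  fun p q => (hg p q).trans (hf (g p) (g q))

theorem PreservesRel.inv {g : Equiv.Perm X} (hg : PreservesRel r g) : PreservesRel r g⁻¹ :=
  fun p q => by simpa using (hg (g⁻¹ p) (g⁻¹ q)).symm

namespace IsLocalPreMoufangSet

theorem eq_of_apply_eq (hM : IsLocalPreMoufangSet r U) {p c : X} {g h : Equiv.Perm X}
    (hg : g ∈ U p) (hh : h ∈ U p) (hc : ¬ r.r c p) (he : g c = h c) : g = h := by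
  have hgc : ¬ r.r (g c) p := by
    rwa [← hM.fixes p g hg, ← hM.preserves p g hg]
  obtain ⟨w, -, hw⟩ := hM.lm1 p c (g c) hc hgc
  exact (hw g ⟨hg, rfl⟩).trans (hw h ⟨hh, he.symm⟩).symm

end IsLocalPreMoufangSet

theorem IsLocalMoufangSet.conj_mem (hM : IsLocalMoufangSet r U) {g k : Equiv.Perm X}
    (hg : g ∈ ⨆ y, U y) {p : X} (hk : k ∈ U p) : g * k * g⁻¹ ∈ U (g p) := by
  rw [← hM.lm2 p g hg]
  exact Subgroup.mem_map.mpr ⟨k, hk, rfl⟩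

namespace IsMuMap

variable {o i x : X} {μ : Equiv.Perm X}

theorem apply_o (hμ : IsMuMap U o i x μ) : μ o = i := by
  obtain ⟨-, -, -, -, h, -⟩ := hμ
  exact h

theorem apply_i (hμ : IsMuMap U o i x μ) : μ i = o := by
  obtain ⟨-, -, -, -, -, h⟩ := hμ
  exact h

theorem mem_iSup (hμ : IsMuMap U o i x μ) : μ ∈ ⨆ y, U y := by
  obtain ⟨a, ha, -, ⟨u, hu, v, hv, rfl⟩, -⟩ := hμ
  exact mul_mem (mul_mem (le_iSup U o hu) (le_iSup U i ha)) (le_iSup U o hv)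

theorem preservesRel (hM : IsLocalPreMoufangSet r U) (hμ : IsMuMap U o i x μ) :
    PreservesRel r μ := by
  obtain ⟨a, ha, -, ⟨u, hu, v, hv, rfl⟩, -⟩ := hμ
  exact ((hM.preserves o u hu).mul (hM.preserves i a ha)).mul (hM.preserves o v hv)

theorem unique (hM : IsLocalPreMoufangSet r U) (hoi : ¬ r.r o i) (hxo : ¬ r.r x o)
    {μ' : Equiv.Perm X} (hμ : IsMuMap U o i x μ) (hμ' : IsMuMap U o i x μ') : μ = μ' := by
  have hio : ¬ r.r i o := fun h => hoi (r.symm h)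
  obtain ⟨a, ha, hao, ⟨u, hu, v, hv, rfl⟩, hμo, hμi⟩ := hμ
  obtain ⟨a', ha', ha'o, ⟨u', hu', v', hv', rfl⟩, hμ'o, hμ'i⟩ := hμ'
  obtain rfl : a = a' := hM.eq_of_apply_eq ha ha' hoi (hao.trans ha'o.symm)
  simp only [Equiv.Perm.mul_apply, hM.fixes o v hv, hM.fixes o v' hv', hao]
    at hμo hμ'o hμi hμ'i
  obtain rfl : u = u' := hM.eq_of_apply_eq hu hu' hxo (hμo.trans hμ'o.symm)
  have hvi : v i = v' i := by
    apply (u * a).injective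
    simp only [Equiv.Perm.mul_apply, hμi, hμ'i]
  rw [hM.eq_of_apply_eq hv hv' hio hvi]

theorem inv (hM : IsLocalPreMoufangSet r U) (hoi : ¬ r.r o i) (hμ : IsMuMap U o i x μ)
    {a : Equiv.Perm X} (ha : a ∈ U i) (hao : a o = x) : IsMuMap U o i (a⁻¹ o) μ⁻¹ := by
  obtain ⟨a', ha', ha'o, ⟨u, hu, v, hv, rfl⟩, hμo, hμi⟩ := hμ
  obtain rfl : a' = a := hM.eq_of_apply_eq ha' ha hoi (ha'o.trans hao.symm)
  refine ⟨a'⁻¹, inv_mem ha', rfl, ⟨v⁻¹, inv_mem hv, u⁻¹, inv_mem hu, by group⟩, ?_, ?_⟩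
  · rw [Equiv.Perm.inv_eq_iff_eq, hμi]
  · rw [Equiv.Perm.inv_eq_iff_eq, hμo]

theorem conj_inv (hM : IsLocalMoufangSet r U) (hμ : IsMuMap U o i x μ) {τ : Equiv.Perm X}
    (hτ : τ ∈ ⨆ y, U y) (hτo : τ o = i) (hτi : τ i = o) :
    IsMuMap U o i (τ x) (τ * μ⁻¹ * τ⁻¹) := by
  have hτ_inv_o : τ⁻¹ o = i := Equiv.Perm.inv_eq_iff_eq.mpr hτi.symm
  have hτ_inv_i : τ⁻¹ i = o := Equiv.Perm.inv_eq_iff_eq.mpr hτo.symm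
  have hconj {p q : X} (hpq : τ p = q) {k : Equiv.Perm X} (hk : k ∈ U p) :
      τ * k * τ⁻¹ ∈ U q :=
    hpq ▸ hM.conj_mem hτ hk
  obtain ⟨a, ha, hao, ⟨u, hu, v, hv, rfl⟩, hμo, hμi⟩ := hμ
  have hux : u x = i := by
    simpa only [Equiv.Perm.mul_apply, hM.fixes o v hv, hao] using hμo
  have hua : u * a ∈ ⨆ y, U y := mul_mem (le_iSup U o hu) (le_iSup U i ha)
  have hc : (u * a) * v⁻¹ * (u * a)⁻¹ ∈ U i := by
    simpa only [Equiv.Perm.mul_apply, hao, hux] using hM.conj_mem hua (inv_mem hv)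
  refine ⟨τ * u⁻¹ * τ⁻¹, hconj hτo (inv_mem hu), ?_,
    ⟨τ * a⁻¹ * τ⁻¹, hconj hτi (inv_mem ha), τ * ((u * a) * v⁻¹ * (u * a)⁻¹) * τ⁻¹,
      hconj hτi hc, by group⟩, ?_, ?_⟩
  all_goals simp only [Equiv.Perm.mul_apply]
  · rw [hτ_inv_o, Equiv.Perm.inv_eq_iff_eq.mpr hux.symm]
  · rw [hτ_inv_o, Equiv.Perm.inv_eq_iff_eq.mpr hμo.symm, hτo]
  · rw [hτ_inv_i, Equiv.Perm.inv_eq_iff_eq.mpr hμi.symm, hτi]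

end IsMuMap

/-- for a unit `x` and a μ-map `τ`, one has `μ_x⁻¹ = μ_{-x}` and
`μ_{xτ} = μ_{-x}^τ`.  Here `a = α_x`, so `-x = a⁻¹ o`; the paper's conjugation
`g^τ = τ⁻¹ g τ` (right actions) corresponds to `τ * g * τ⁻¹` for left actions. -/
theorem statement5 (r : Setoid X) (U : X → Subgroup (Equiv.Perm X))
    (hM : IsLocalMoufangSet r U) (o i : X) (hoi : ¬ r.r o i)
    (τ : Equiv.Perm X) (hτ : ∃ e, ¬ r.r e o ∧ ¬ r.r e i ∧ IsMuMap U o i e τ)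
    (x : X) (hxo : ¬ r.r x o) (hxi : ¬ r.r x i)
    (a : Equiv.Perm X) (haU : a ∈ U i) (hao : a o = x)
    (mx mnx mxt : Equiv.Perm X)
    (hmx : IsMuMap U o i x mx) (hmnx : IsMuMap U o i (a⁻¹ o) mnx)
    (hmxt : IsMuMap U o i (τ x) mxt) :
    mnx = mx⁻¹ ∧ mxt = τ * mnx * τ⁻¹ := by
  obtain ⟨_, -, -, hτ⟩ := hτ
  have hM' := hM.toIsLocalPreMoufangSet
  have hnx : ¬ r.r (a⁻¹ o) o := by
    have hax : a⁻¹ x = o := Equiv.Perm.inv_eq_iff_eq.mpr hao.symm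
    intro h
    refine hxo (r.symm (((hM.preserves i a haU).inv o x).mpr ?_))
    rwa [hax]
  have hτx : ¬ r.r (τ x) o := by
    rwa [← hτ.apply_i, ← hτ.preservesRel hM']
  have hinv : mnx = mx⁻¹ := hmnx.unique hM' hoi hnx (hmx.inv hM' hoi haU hao)
  exact ⟨hinv, hinv ▸ hmxt.unique hM' hoi hτx
    (hmx.conj_inv hM hτ.mem_iSup hτ.apply_o hτ.apply_i)⟩
end

section
/- In a local Moufang set, U_0^∘ · U_∞ ⊆ U_∞ · H · U_0^∘, where H = ⟨μ_x μ_y : x,y units⟩ is the Hua subgroup and U_0^∘ is the kernel of the induced action of U_0 on the quotient X̄. -/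
/-!
Local Moufang sets, following E. Rijcken, "Local Moufang sets".
A local Moufang set is a set `X` with an equivalence relation (a `Setoid`)
having more than 2 classes, together with root groups `U x` of
equivalence-preserving permutations, satisfying (LM0), (LM1), (LM1'), (LM2).
We use left actions; the paper's right-composition word `a₁a₂⋯aₙ` corresponds
to our product `aₙ * ⋯ * a₁`, and the paper's conjugation `g^h = h⁻¹gh`
corresponds to `h * g * h⁻¹` (i.e. `MulAut.conj h g`).
-/

variable {X : Type*}

/-!
Write `0, ∞` for `o, i`. If `u ∈ U ∞` moves `0` to a unit, then `μ := p * u * q` is a μ-map for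
suitable `p, q ∈ U 0`, so `u * g = p⁻¹ * μ * q₁` with `q₁ := q⁻¹ * g ∈ U 0`. As `g` is trivial
on the quotient, `q₁` moves `∞` to a unit, so likewise `ν := s * q₁ * t` is a μ-map for suitable
`s, t ∈ U ∞`, and `u * g = (p⁻¹ * (μ * s⁻¹ * μ⁻¹)) * (μ * ν) * t⁻¹`. The first factor lies in
`U 0` by (LM2), and is trivial on the quotient because `s` and `μ⁻¹ * p⁻¹ * μ`, both in `U ∞`,
agree on the class of `q₁ ∞`, hence everywhere by (LM1').
If `u 0 ∼ 0`, then `u` is trivial on the quotient; split `u = (u * α⁻¹) * α` with `α ∈ U ∞`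
moving `0` to a unit, apply the first case twice, and use that `H` normalizes `U ∞`.
-/

namespace PreservesRel

variable {r : Setoid X} {a b : Equiv.Perm X}

theorem inv_s6 (ha : PreservesRel r a) : PreservesRel r a⁻¹ := fun x y => by
  simpa using (ha (a⁻¹ x) (a⁻¹ y)).symm

theorem mul_s6 (ha : PreservesRel r a) (hb : PreservesRel r b) : PreservesRel r (a * b) :=
  fun x y => (hb x y).trans (ha (b x) (b y))

end PreservesRel

def InducedEq (r : Setoid X) (a b : Equiv.Perm X) : Prop :=
  ∀ x, r.r (a x) (b x)

namespace InducedEq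

variable {r : Setoid X} {a b c : Equiv.Perm X}

theorem mul_left (hc : PreservesRel r c) (h : InducedEq r a b) : InducedEq r (c * a) (c * b) :=
  fun x => (hc _ _).mp (h x)

theorem mul_right (h : InducedEq r a b) (c : Equiv.Perm X) : InducedEq r (a * c) (b * c) :=
  fun x => h (c x)

theorem inv_s6 (ha : PreservesRel r a) (h : InducedEq r a b) : InducedEq r a⁻¹ b⁻¹ := fun x =>
  (ha _ _).mpr (by simpa using r.iseqv.symm (h (b⁻¹ x)))

theorem inv_mul_conj_inv {s μ p : Equiv.Perm X} (hs : PreservesRel r s) (hμ : PreservesRel r μ)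
    (hp : PreservesRel r p) (h : InducedEq r s (μ⁻¹ * p⁻¹ * μ)) :
    InducedEq r (p⁻¹ * (μ * s⁻¹ * μ⁻¹)) 1 := by
  have h' := (((h.inv_s6 hs).mul_left hμ).mul_right μ⁻¹).mul_left hp.inv_s6
  rwa [show p⁻¹ * (μ * (μ⁻¹ * p⁻¹ * μ)⁻¹ * μ⁻¹) = 1 by group] at h'

end InducedEq

namespace IsLocalPreMoufangSet

variable {r : Setoid X} {U : X → Subgroup (Equiv.Perm X)} (hP : IsLocalPreMoufangSet r U)
include hP

theorem rel_apply_iff {x a : X} {c : Equiv.Perm X} (hc : c ∈ U x) : r.r (c a) x ↔ r.r a x := by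
  have h := hP.preserves x c hc a x
  rwa [hP.fixes x c hc, Iff.comm] at h

theorem exists_unit (o i : X) : ∃ e : X, ¬ r.r e o ∧ ¬ r.r e i := by
  obtain ⟨a, b, c, hab, hac, hbc⟩ := hP.big
  have same : ∀ {x y z : X}, r.r x z → r.r y z → r.r x y :=
    fun hx hy => r.iseqv.trans hx (r.iseqv.symm hy)
  by_contra! h
  have key : ∀ e, r.r e o ∨ r.r e i := fun e => or_iff_not_imp_left.mpr (h e)
  rcases key a with ha | ha <;> rcases key b with hb | hb <;> rcases key c with hc | hc
  all_goals first | exact hab (same ha hb) | exact hac (same ha hc) | exact hbc (same hb hc)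

theorem exists_swap {a b : X} {c : Equiv.Perm X} (hab : ¬ r.r a b) (hc : c ∈ U b)
    (hca : ¬ r.r (c a) a) : ∃ p ∈ U a, ∃ q ∈ U a, (p * c * q) a = b ∧ (p * c * q) b = a := by
  have hba : ¬ r.r b a := fun h => hab (r.iseqv.symm h)
  have hc'a : ¬ r.r (c⁻¹ a) a := fun h =>
    hca (r.iseqv.symm (by simpa using (hP.preserves b c hc _ _).mp h))
  obtain ⟨p, ⟨hp, hpc⟩, -⟩ := hP.lm1 a (c a) b hca hba
  obtain ⟨q, ⟨hq, hqb⟩, -⟩ := hP.lm1 a b (c⁻¹ a) hba hc'a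
  refine ⟨p, hp, q, hq, ?_, ?_⟩
  · simp [hP.fixes a q hq, hpc]
  · simp [hqb, hP.fixes a p hp]

end IsLocalPreMoufangSet

theorem IsMuMap.mem_iSup_s6 {U : X → Subgroup (Equiv.Perm X)} {o i x : X} {μ : Equiv.Perm X}
    (h : IsMuMap U o i x μ) : μ ∈ ⨆ y, U y := by
  obtain ⟨a, ha, -, ⟨u, hu, v, hv, rfl⟩, -⟩ := h
  exact mul_mem (mul_mem (Subgroup.mem_iSup_of_mem o hu) (Subgroup.mem_iSup_of_mem i ha))
    (Subgroup.mem_iSup_of_mem o hv)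

/-- Membership in the product `U o^∘ * H * U i` (in the order of our left actions). -/
def HuaDecomposable (r : Setoid X) (U : X → Subgroup (Equiv.Perm X)) (o i : X)
    (f : Equiv.Perm X) : Prop :=
  ∃ v ∈ U i, ∃ hh ∈ HuaSubgroup r U o i, ∃ w ∈ U o, InducedEq r w 1 ∧ f = w * hh * v

namespace IsLocalMoufangSet

variable {r : Setoid X} {U : X → Subgroup (Equiv.Perm X)} (hM : IsLocalMoufangSet r U)
include hM

theorem conj_mem_s6 {g a : Equiv.Perm X} {x y : X} (hg : g ∈ ⨆ z, U z) (ha : a ∈ U x)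
    (hgx : g x = y) : g * a * g⁻¹ ∈ U y := by
  rw [← hgx, ← hM.lm2 x g hg]
  exact ⟨a, ha, rfl⟩

theorem conj_inv_mem {g a : Equiv.Perm X} {x y : X} (hg : g ∈ ⨆ z, U z) (ha : a ∈ U x)
    (hgy : g y = x) : g⁻¹ * a * g ∈ U y := by
  simpa using hM.conj_mem_s6 (inv_mem hg) ha (Equiv.Perm.inv_eq_iff_eq.mpr hgy.symm)

theorem mem_normalizer_of_apply_eq {g : Equiv.Perm X} {x : X} (hg : g ∈ ⨆ z, U z)
    (hgx : g x = x) : g ∈ Subgroup.normalizer (U x : Set (Equiv.Perm X)) := by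
  rw [Subgroup.mem_normalizer_iff_map_conj_eq]
  simpa [hgx] using hM.lm2 x g hg

theorem huaSubgroup_le_normalizer (o i : X) :
    HuaSubgroup r U o i ≤ Subgroup.normalizer (U i : Set (Equiv.Perm X)) := by
  refine (Subgroup.closure_le _).mpr ?_
  rintro _ ⟨x, y, μx, μy, -, -, hμx, hμy, rfl⟩
  refine hM.mem_normalizer_of_apply_eq (mul_mem hμx.mem_iSup_s6 hμy.mem_iSup_s6) ?_
  obtain ⟨-, -, -, -, hμxo, -⟩ := hμx
  obtain ⟨-, -, -, -, -, hμyi⟩ := hμy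
  simp [hμyi, hμxo]

theorem huaDecomposable_mul_right {o i : X} {f k v : Equiv.Perm X}
    (hf : HuaDecomposable r U o i f) (hk : k ∈ HuaSubgroup r U o i) (hv : v ∈ U i) :
    HuaDecomposable r U o i (f * (k * v)) := by
  obtain ⟨v', hv', k', hk', w, hw, hw1, rfl⟩ := hf
  have hconj : k⁻¹ * v' * k ∈ U i := by
    simpa using (Subgroup.mem_normalizer_iff.mp
      (hM.huaSubgroup_le_normalizer o i (inv_mem hk)) v').mp hv'
  exact ⟨k⁻¹ * v' * k * v, mul_mem hconj hv, k' * k, mul_mem hk' hk, w, hw, hw1, by group⟩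

theorem isMuMap_of_swap {o i : X} {s t c : Equiv.Perm X} (hs : s ∈ U i) (ht : t ∈ U i)
    (hc : c ∈ U o) (hνo : (s * c * t) o = i) (hνi : (s * c * t) i = o) :
    IsMuMap U o i (t o) (s * c * t) := by
  have hν : s * c * t ∈ ⨆ z, U z := mul_mem (mul_mem (Subgroup.mem_iSup_of_mem i hs)
    (Subgroup.mem_iSup_of_mem o hc)) (Subgroup.mem_iSup_of_mem i ht)
  exact ⟨t, ht, rfl, ⟨c, hc, (s * c * t)⁻¹ * s * (s * c * t), hM.conj_inv_mem hν hs hνo,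
    by group⟩, hνo, hνi⟩

theorem huaDecomposable_mul_of_not_rel {o i : X} (hoi : ¬ r.r o i) {u g : Equiv.Perm X}
    (hu : u ∈ U i) (hg : g ∈ U o) (hg1 : InducedEq r g 1) (hx : ¬ r.r (u o) o) :
    HuaDecomposable r U o i (u * g) := by
  have hio : ¬ r.r i o := fun h => hoi (r.iseqv.symm h)
  have pres : ∀ {z : X} {c : Equiv.Perm X}, c ∈ U z → PreservesRel r c :=
    fun hc => hM.preserves _ _ hc
  obtain ⟨p, hp, q, hq, hμo, hμi⟩ := hM.exists_swap hoi hu hx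
  set μ := p * u * q with hμ_def
  have hμmu : IsMuMap U o i (u o) μ := ⟨u, hu, rfl, ⟨p, hp, q, hq, rfl⟩, hμo, hμi⟩
  have hμ : μ ∈ ⨆ z, U z := hμmu.mem_iSup_s6
  have hμr : PreservesRel r μ := ((pres hp).mul_s6 (pres hu)).mul_s6 (pres hq)
  set q₁ := q⁻¹ * g with hq₁_def
  have hq₁ : q₁ ∈ U o := mul_mem (inv_mem hq) hg
  set m := μ⁻¹ * p⁻¹ * μ with hm_def
  have hm : m ∈ U i := hM.conj_inv_mem hμ (inv_mem hp) hμi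
  have hmq₁ : r.r (m (q₁ i)) o := by
    have hmq₁_eq : m * q₁ = μ⁻¹ * u * g := by simp only [hm_def, hμ_def, hq₁_def]; group
    have hugi : r.r (u (g i)) i := by
      simpa [hM.fixes i u hu] using (pres hu _ _).mp (hg1 i)
    have h := (hμr.inv_s6 _ _).mp hugi
    rwa [Equiv.Perm.inv_eq_iff_eq.mpr hμo.symm, ← Equiv.Perm.mul_apply, ← Equiv.Perm.mul_apply,
      ← hmq₁_eq] at h
  have hq₁i : ¬ r.r (q₁ i) i := fun h =>
    hoi (r.iseqv.trans (r.iseqv.symm hmq₁) ((hM.rel_apply_iff hm).mpr h))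
  obtain ⟨s, hs, t, ht, hνi, hνo⟩ := hM.exists_swap hio hq₁ hq₁i
  have hsm : InducedEq r s m := hM.lm1'_sharp i s hs m hm (q₁ i) hq₁i (by
    have hsq₁ : s (q₁ i) = o := by simpa [hM.fixes i t ht] using hνi
    rw [hsq₁]; exact r.iseqv.symm hmq₁)
  have hto : ¬ r.r (t o) o := by
    have hq₁t : q₁ (t o) = i := s.injective (by rw [hM.fixes i s hs]; exact hνo)
    rw [← hM.rel_apply_iff hq₁, hq₁t]; exact hio
  have hhua : μ * (s * q₁ * t) ∈ HuaSubgroup r U o i :=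
    Subgroup.subset_closure ⟨u o, t o, μ, s * q₁ * t, ⟨hx, (hM.rel_apply_iff hu).not.mpr hoi⟩,
      ⟨hto, (hM.rel_apply_iff ht).not.mpr hoi⟩, hμmu,
      hM.isMuMap_of_swap hs ht hq₁ hνo hνi, rfl⟩
  refine ⟨t⁻¹, inv_mem ht, _, hhua, p⁻¹ * (μ * s⁻¹ * μ⁻¹),
    mul_mem (inv_mem hp) (hM.conj_mem_s6 hμ (inv_mem hs) hμi), ?_, ?_⟩
  · exact hsm.inv_mul_conj_inv (pres hs) hμr (pres hp)
  · simp only [hμ_def, hq₁_def]; group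

theorem huaDecomposable_mul_of_rel {o i : X} (hoi : ¬ r.r o i) {u g : Equiv.Perm X}
    (hu : u ∈ U i) (hg : g ∈ U o) (hg1 : InducedEq r g 1) (hx : r.r (u o) o) :
    HuaDecomposable r U o i (u * g) := by
  have hu1 : InducedEq r u 1 := hM.lm1'_sharp i u hu 1 (one_mem _) o hoi hx
  obtain ⟨e, heo, hei⟩ := hM.exists_unit o i
  obtain ⟨α, ⟨hα, hαo⟩, -⟩ := hM.lm1 i o e hoi hei
  obtain ⟨v, hv, k, hk, w, hw, hw1, hαg⟩ :=
    hM.huaDecomposable_mul_of_not_rel hoi hα hg hg1 (by rwa [hαo])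
  have hα'o : ¬ r.r (α⁻¹ o) o := fun h =>
    heo (r.iseqv.symm (by simpa [hαo] using (hM.preserves i α hα _ _).mp h))
  have hx' : ¬ r.r ((u * α⁻¹) o) o := fun h =>
    hα'o (r.iseqv.trans (r.iseqv.symm (hu1 _)) h)
  have hug : u * g = u * α⁻¹ * w * (k * v) := by
    rw [mul_assoc (u * α⁻¹), ← mul_assoc w, ← hαg]; group
  rw [hug]
  exact hM.huaDecomposable_mul_right
    (hM.huaDecomposable_mul_of_not_rel hoi (mul_mem hu (inv_mem hα)) hw hw1 hx') hk hv

end IsLocalMoufangSet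

/-- in a local Moufang set, `U 0 ^∘ · U ∞ ⊆ U ∞ · H · U 0 ^∘`, where
`U 0 ^∘` is the kernel of the induced action of `U 0` on the quotient and `H` is the
Hua subgroup.  (With right actions, the product "first `g ∈ U 0 ^∘`, then `u ∈ U ∞`"
is our `u * g`, and "first `v ∈ U ∞`, then `h ∈ H`, then `w ∈ U 0 ^∘`" is `w * h * v`.) -/
theorem statement6 (r : Setoid X) (U : X → Subgroup (Equiv.Perm X))
    (hM : IsLocalMoufangSet r U) (o i : X) (hoi : ¬ r.r o i) :
    ∀ g ∈ U o, (∀ b : X, r.r (g b) b) → ∀ u ∈ U i,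
      ∃ v ∈ U i, ∃ hh ∈ HuaSubgroup r U o i, ∃ w ∈ U o,
        (∀ b : X, r.r (w b) b) ∧ u * g = w * hh * v := by
  intro g hg hg1 u hu
  by_cases hx : r.r (u o) o
  · exact hM.huaDecomposable_mul_of_rel hoi hu hg hg1 hx
  · exact hM.huaDecomposable_mul_of_not_rel hoi hu hg hg1 hx
end

section
/- Let (X,∼), U ≤ Sym(X,∼), τ ∈ Sym(X,∼) satisfy: U fixes a point ∞ and acts sharply transitively on X∖[∞]; the induced action of U on X̄ is sharply transitive on X̄∖{[∞]}; ∞τ ≁ ∞ and ∞τ² = ∞. Then the data M(U,τ) constructed by defining U_∞ := U, U_0 := U^τ, U_x := U_0^{α_x} for x ≁ ∞ and U_x := U_∞^{γ_{xτ^{-1}}} for x ∼ ∞ is a local Moufang set if and only if the Hua maps h_x = τ α_x τ^{-1} α_{−(xτ^{-1})} τ α_{−(−(xτ^{-1}))τ} normalize U for all units x. -/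
/-!
Local Moufang sets, following E. Rijcken, "Local Moufang sets".
A local Moufang set is a set `X` with an equivalence relation (a `Setoid`)
having more than 2 classes, together with root groups `U x` of
equivalence-preserving permutations, satisfying (LM0), (LM1), (LM1'), (LM2).
We use left actions; the paper's right-composition word `a₁a₂⋯aₙ` corresponds
to our product `aₙ * ⋯ * a₁`, and the paper's conjugation `g^h = h⁻¹gh`
corresponds to `h * g * h⁻¹` (i.e. `MulAut.conj h g`).
-/

variable {X : Type*}

/-- The family of root groups of the construction `M(U, τ)`; here `i = ∞`, `0 = τ ∞`,
`α x` is the unique element of `U` with `0 · α_x = x` (for `x ≁ ∞`), and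
`γ_x = α_x^τ`.  For `x ≁ ∞`, `U_x := U_0 ^ α_x = (U^τ)^{α_x}` which with left
actions is the conjugate of `U` by `α_x * τ`; for `x ∼ ∞`,
`U_x := U ^ γ_{xτ⁻¹}`, the conjugate of `U` by `τ * α_{τ⁻¹ x} * τ⁻¹`. -/
noncomputable def constructedU (r : Setoid X) (U : Subgroup (Equiv.Perm X))
    (τ : Equiv.Perm X) (α : X → Equiv.Perm X) (i : X) : X → Subgroup (Equiv.Perm X) :=
  fun x =>
    letI := Classical.dec (r.r x i)
    if r.r x i then U.map (MulAut.conj (τ * α (τ⁻¹ x) * τ⁻¹)).toMonoidHom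
    else U.map (MulAut.conj (α x * τ)).toMonoidHom

/-- `-x := 0 · α_x⁻¹`, where `o = 0`. -/
def negOf (α : X → Equiv.Perm X) (o x : X) : X := (α x)⁻¹ o

/-- The Hua map `h_x = τ · α_x · τ⁻¹ · α_{-(xτ⁻¹)} · τ · α_{-((-(xτ⁻¹))τ)}` of the
construction `M(U, τ)` (with right actions; as a left-action composite this is the
reversed product below), where `o = τ i` is the point `0`. -/
def huaOf (α : X → Equiv.Perm X) (τ : Equiv.Perm X) (o x : X) : Equiv.Perm X :=
  α (negOf α o (τ (negOf α o (τ⁻¹ x)))) * τ * α (negOf α o (τ⁻¹ x)) * τ⁻¹ * α x * τ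

/-!
Every root group `U_x` is the conjugate of `U` by a permutation taking `∞` to `x`, so (LM0),
(LM1) and (LM1') are inherited from `U`; the content is (LM2), i.e. `conj g • U_x = U_{g x}`.

For a unit `x`, `U_x = conj (α_x τ) • U` and `h_x = α_c γ_{τ⁻¹ x}⁻¹ α_x τ` with `α_c ∈ U`, so
`h_x` normalizes `U` exactly when also `U_x = conj γ_{τ⁻¹ x} • U`. Granting this for all units,
elements of `U` satisfy (LM2) at every `x ≁ ∞`, elements of `U₀` at every `x ≁ 0`, and hence
the `μ`-maps `μ_x = h_x τ⁻¹`, which interchange `∞` and `0` and thus `U` and `U₀`, satisfy it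
everywhere. For `g ∈ U` with `g 0` a unit, a `μ`-map `m` and `γ = γ_{τ⁻¹ (g 0)}`, the element
`ψ = γ⁻¹ g m` normalizes `U` and so satisfies (LM2) at every point `≁ ∞`; writing
`g = γ ψ m⁻¹` covers the points `∼ ∞`. Every other `g ∈ U` is a product of two such elements,
and `U₀ = conj m • U`.

Conversely, (LM2) for `μ_x`, a product of elements of `U = U_∞` and `U₀ = U_0` with
`μ_x 0 = ∞`, gives `conj μ_x • U₀ = U`, i.e. `conj h_x • U = U`.
-/

open Equiv Pointwise

theorem Equiv.Perm.apply_inv_self {α : Type*} (f : Perm α) (x : α) : f (f⁻¹ x) = x :=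
  f.apply_symm_apply x

theorem Equiv.Perm.inv_apply_self {α : Type*} (f : Perm α) (x : α) : f⁻¹ (f x) = x :=
  f.symm_apply_apply x

namespace PreservesRel

variable {r : Setoid X} {g h : Perm X}

theorem rel_iff (hg : PreservesRel r g) {a b : X} : r.r (g a) (g b) ↔ r.r a b :=
  (hg a b).symm

theorem mul_s8 (hg : PreservesRel r g) (hh : PreservesRel r h) : PreservesRel r (g * h) :=
  fun a b => (hh a b).trans (hg (h a) (h b))

theorem inv_s8 (hg : PreservesRel r g) : PreservesRel r g⁻¹ := fun a b => by
  simpa using (hg (g⁻¹ a) (g⁻¹ b)).symm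

theorem inv_apply_rel_iff (hg : PreservesRel r g) {a b : X} :
    r.r (g⁻¹ a) b ↔ r.r a (g b) := by
  simpa using hg.inv_s8.rel_iff (a := a) (b := g b)

end PreservesRel

namespace LocalMoufang

variable {r : Setoid X}

theorem mem_conj_smul_iff {g a : Perm X} {H : Subgroup (Perm X)} :
    a ∈ MulAut.conj g • H ↔ g⁻¹ * a * g ∈ H := by
  rw [Subgroup.mem_pointwise_smul_iff_inv_smul_mem, ← map_inv, MulAut.smul_def,
    MulAut.conj_apply, inv_inv]

theorem mul_mul_inv_mem_conj_smul {g a : Perm X} {H : Subgroup (Perm X)} (ha : a ∈ H) :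
    g * a * g⁻¹ ∈ MulAut.conj g • H :=
  Subgroup.smul_mem_pointwise_smul a _ H ha

theorem conj_smul_eq_self_iff {g : Perm X} {H : Subgroup (Perm X)} :
    MulAut.conj g • H = H ↔ ∀ a, a ∈ H ↔ g * a * g⁻¹ ∈ H := by
  rw [← Subgroup.mem_normalizer_iff, Subgroup.mem_normalizer_iff'']
  simp only [SetLike.ext_iff, mem_conj_smul_iff, Iff.comm]

theorem conj_mul_smul (g h : Perm X) (H : Subgroup (Perm X)) :
    MulAut.conj (g * h) • H = MulAut.conj g • MulAut.conj h • H := by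
  rw [map_mul, mul_smul]

theorem rel_conj_apply_of_rel {σ σ' u : Perm X} (hσ : PreservesRel r σ)
    (hu : PreservesRel r u) (h : ∀ a, r.r (σ a) (σ' a)) (a : X) :
    r.r ((σ * u * σ⁻¹) a) ((σ' * u * σ'⁻¹) a) := by
  have h₁ : r.r (σ'⁻¹ a) (σ⁻¹ a) := by
    rw [← hσ.rel_iff, Perm.apply_inv_self]
    simpa only [Perm.apply_inv_self] using h (σ'⁻¹ a)
  exact r.trans' (hσ.rel_iff.2 (hu.rel_iff.2 (r.symm' h₁))) (h _)

structure IsRootGroupAt (r : Setoid X) (V : Subgroup (Perm X)) (x : X) : Prop where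
  preserves : ∀ g ∈ V, PreservesRel r g
  fixes : ∀ g ∈ V, g x = x
  lm1 : ∀ a b : X, ¬ r.r a x → ¬ r.r b x → ∃! g : Perm X, g ∈ V ∧ g a = b
  lm1'_trans : ∀ a b : X, ¬ r.r a x → ¬ r.r b x → ∃ g ∈ V, r.r (g a) b
  lm1'_sharp : ∀ g ∈ V, ∀ h ∈ V, ∀ a : X, ¬ r.r a x → r.r (g a) (h a) →
    ∀ b : X, r.r (g b) (h b)

namespace IsRootGroupAt

variable {V : Subgroup (Perm X)} {x : X} (hV : IsRootGroupAt r V x)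
include hV

theorem apply_rel_iff {g : Perm X} (hg : g ∈ V) {a : X} : r.r (g a) x ↔ r.r a x := by
  conv_lhs => rw [← hV.fixes g hg]
  exact (hV.preserves g hg).rel_iff

theorem eq_of_apply_eq {g h : Perm X} (hg : g ∈ V) (hh : h ∈ V) {a : X} (ha : ¬ r.r a x)
    (hgh : g a = h a) : g = h := by
  obtain ⟨k, -, hk⟩ := hV.lm1 a (g a) ha (by rwa [hV.apply_rel_iff hg])
  rw [hk g ⟨hg, rfl⟩, hk h ⟨hh, hgh.symm⟩]

theorem rel_apply_self {g : Perm X} (hg : g ∈ V) {a : X} (ha : ¬ r.r a x)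
    (hga : r.r (g a) a) (b : X) : r.r (g b) b :=
  hV.lm1'_sharp g hg 1 V.one_mem a ha hga b

theorem conj {σ : Perm X} (hσ : PreservesRel r σ) :
    IsRootGroupAt r (MulAut.conj σ • V) (σ x) := by
  have hrel : ∀ a, r.r a (σ x) ↔ r.r (σ⁻¹ a) x := fun a => hσ.inv_apply_rel_iff.symm
  have mem : ∀ {g}, g ∈ MulAut.conj σ • V ↔ ∃ v ∈ V, σ * v * σ⁻¹ = g := fun {g} =>
    Subgroup.mem_smul_pointwise_iff_exists g _ V
  refine ⟨?_, ?_, fun a b ha hb => ?_, fun a b ha hb => ?_, ?_⟩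
  · intro g hg
    obtain ⟨v, hv, rfl⟩ := mem.1 hg
    exact (hσ.mul_s8 (hV.preserves v hv)).mul_s8 hσ.inv_s8
  · intro g hg
    obtain ⟨v, hv, rfl⟩ := mem.1 hg
    simp only [Perm.mul_apply, Perm.inv_apply_self, hV.fixes v hv]
  · rw [hrel] at ha hb
    obtain ⟨v, ⟨hv, hva⟩, huniq⟩ := hV.lm1 _ _ ha hb
    refine ⟨σ * v * σ⁻¹, ⟨mem.2 ⟨v, hv, rfl⟩, by simp only [Perm.mul_apply, hva,
      Perm.apply_inv_self]⟩, ?_⟩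
    rintro g ⟨hg, hga⟩
    obtain ⟨w, hw, rfl⟩ := mem.1 hg
    rw [huniq w ⟨hw, by rw [← hga]; simp only [Perm.mul_apply, Perm.inv_apply_self]⟩]
  · rw [hrel] at ha hb
    obtain ⟨v, hv, hva⟩ := hV.lm1'_trans _ _ ha hb
    refine ⟨σ * v * σ⁻¹, mem.2 ⟨v, hv, rfl⟩, ?_⟩
    simpa only [Perm.mul_apply, Perm.apply_inv_self] using hσ.rel_iff.2 hva
  · rintro g hg h hh a ha hgh b
    obtain ⟨v, hv, rfl⟩ := mem.1 hg
    obtain ⟨w, hw, rfl⟩ := mem.1 hh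
    rw [hrel] at ha
    simp only [Perm.mul_apply, hσ.rel_iff] at hgh ⊢
    exact hV.lm1'_sharp v hv w hw _ ha hgh _

end IsRootGroupAt

/-- The data of the construction `M(U, τ)`: `i` is `∞`, `τ i` is `0`, and `α x ∈ U` maps
`0` to `x`. -/
structure Construction (r : Setoid X) where
  U : Subgroup (Perm X)
  τ : Perm X
  i : X
  α : X → Perm X
  big : ∃ a b c : X, ¬ r.r a b ∧ ¬ r.r a c ∧ ¬ r.r b c
  isRootGroupAt : IsRootGroupAt r U i
  τ_preserves : PreservesRel r τ
  c2 : ¬ r.r (τ i) i ∧ τ (τ i) = i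
  α_spec : ∀ x : X, ¬ r.r x i → α x ∈ U ∧ α x (τ i) = x

namespace Construction

variable (D : Construction r)

def o : X := D.τ D.i

def U₀ : Subgroup (Perm X) := MulAut.conj D.τ • D.U

def γ (z : X) : Perm X := D.τ * D.α z * D.τ⁻¹

noncomputable def rootGroup : X → Subgroup (Perm X) := constructedU r D.U D.τ D.α D.i

variable {D}

theorem o_not_rel_i : ¬ r.r D.o D.i := D.c2.1

theorem i_not_rel_o : ¬ r.r D.i D.o := fun h => D.o_not_rel_i (r.symm' h)

theorem not_rel_o_of_rel_i {x : X} (hx : r.r x D.i) : ¬ r.r x D.o :=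
  fun h => D.o_not_rel_i (r.trans' (r.symm' h) hx)

theorem τ_o : D.τ D.o = D.i := D.c2.2

theorem τ_inv_i : D.τ⁻¹ D.i = D.o := by
  rw [← D.τ_o, Perm.inv_apply_self]

theorem τ_inv_apply_rel_i_iff {x : X} : r.r (D.τ⁻¹ x) D.i ↔ r.r x D.o := by
  rw [D.τ_preserves.inv_apply_rel_iff]; rfl

theorem isRootGroupAt_U₀ : IsRootGroupAt r D.U₀ D.o :=
  D.isRootGroupAt.conj D.τ_preserves

theorem α_mem {x : X} (hx : ¬ r.r x D.i) : D.α x ∈ D.U := (D.α_spec x hx).1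

theorem α_apply_o {x : X} (hx : ¬ r.r x D.i) : D.α x D.o = x := (D.α_spec x hx).2

theorem eq_α_apply_o {g : Perm X} (hg : g ∈ D.U) : g = D.α (g D.o) := by
  have hgo : ¬ r.r (g D.o) D.i := by rw [D.isRootGroupAt.apply_rel_iff hg]; exact D.o_not_rel_i
  exact D.isRootGroupAt.eq_of_apply_eq hg (D.α_mem hgo) D.o_not_rel_i (D.α_apply_o hgo).symm

theorem α_o : D.α D.o = 1 :=
  D.isRootGroupAt.eq_of_apply_eq (D.α_mem D.o_not_rel_i) D.U.one_mem D.o_not_rel_i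
    (D.α_apply_o D.o_not_rel_i)

theorem α_apply {g : Perm X} (hg : g ∈ D.U) {x : X} (hx : ¬ r.r x D.i) :
    D.α (g x) = g * D.α x := by
  rw [D.eq_α_apply_o (D.U.mul_mem hg (D.α_mem hx)), Perm.mul_apply, D.α_apply_o hx]

theorem negOf_not_rel_i {x : X} (hx : ¬ r.r x D.i) : ¬ r.r (negOf D.α D.o x) D.i := by
  rw [negOf, D.isRootGroupAt.apply_rel_iff (D.U.inv_mem (D.α_mem hx))]
  exact D.o_not_rel_i

theorem α_negOf {x : X} (hx : ¬ r.r x D.i) : D.α (negOf D.α D.o x) = (D.α x)⁻¹ := by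
  rw [D.eq_α_apply_o (D.U.inv_mem (D.α_mem hx))]
  rfl

theorem α_rel_α_apply {x y : X} (hx : ¬ r.r x D.i) (hy : ¬ r.r y D.i) (hxy : r.r x y)
    (a : X) : r.r (D.α x a) (D.α y a) :=
  D.isRootGroupAt.lm1'_sharp _ (D.α_mem hx) _ (D.α_mem hy) D.o D.o_not_rel_i
    (by rwa [D.α_apply_o hx, D.α_apply_o hy]) a

theorem γ_mem_U₀ {z : X} (hz : ¬ r.r z D.i) : D.γ z ∈ D.U₀ :=
  mul_mul_inv_mem_conj_smul (D.α_mem hz)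

theorem γ_apply_i {z : X} (hz : ¬ r.r z D.i) : D.γ z D.i = D.τ z := by
  rw [γ, Perm.mul_apply, Perm.mul_apply, D.τ_inv_i, D.α_apply_o hz]

theorem γ_preserves {z : X} (hz : ¬ r.r z D.i) : PreservesRel r (D.γ z) :=
  D.isRootGroupAt_U₀.preserves _ (D.γ_mem_U₀ hz)

theorem exists_unit : ∃ e : X, ¬ r.r e D.o ∧ ¬ r.r e D.i := by
  obtain ⟨a, b, c, hab, hac, hbc⟩ := D.big
  by_contra! h
  have key : ∀ e, r.r e D.o ∨ r.r e D.i := fun e => or_iff_not_imp_left.2 (h e)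
  rcases key a with ha | ha <;> rcases key b with hb | hb <;> rcases key c with hc | hc <;>
    first
    | exact hab (r.trans' ha (r.symm' hb))
    | exact hac (r.trans' ha (r.symm' hc))
    | exact hbc (r.trans' hb (r.symm' hc))

theorem τ_inv_apply_not_rel_i_of_rel_i {x : X} (hx : r.r x D.i) : ¬ r.r (D.τ⁻¹ x) D.i :=
  D.τ_inv_apply_rel_i_iff.not.2 (D.not_rel_o_of_rel_i hx)

variable (D) in
open Classical in
noncomputable def σ (x : X) : Perm X := if r.r x D.i then D.γ (D.τ⁻¹ x) else D.α x * D.τ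

theorem rootGroup_eq_conj_σ (x : X) : D.rootGroup x = MulAut.conj (D.σ x) • D.U := by
  unfold rootGroup constructedU σ
  split_ifs <;> rfl

theorem σ_apply_i (x : X) : D.σ x D.i = x := by
  unfold σ
  split_ifs with hx
  · rw [D.γ_apply_i (τ_inv_apply_not_rel_i_of_rel_i hx), Perm.apply_inv_self]
  · exact D.α_apply_o hx

theorem σ_preserves (x : X) : PreservesRel r (D.σ x) := by
  unfold σ
  split_ifs with hx
  · exact D.γ_preserves (τ_inv_apply_not_rel_i_of_rel_i hx)
  · exact (D.isRootGroupAt.preserves _ (D.α_mem hx)).mul_s8 D.τ_preserves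

theorem σ_rel_σ_apply {x y : X} (hxy : r.r x y) (a : X) : r.r (D.σ x a) (D.σ y a) := by
  by_cases hx : r.r x D.i
  · have hy : r.r y D.i := r.trans' (r.symm' hxy) hx
    simp only [σ, if_pos hx, if_pos hy, γ, Perm.mul_apply]
    exact D.τ_preserves.rel_iff.2 (D.α_rel_α_apply (τ_inv_apply_not_rel_i_of_rel_i hx)
      (τ_inv_apply_not_rel_i_of_rel_i hy) (D.τ_preserves.inv_s8.rel_iff.2 hxy) _)
  · have hy : ¬ r.r y D.i := fun h => hx (r.trans' hxy h)
    simp only [σ, if_neg hx, if_neg hy, Perm.mul_apply]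
    exact D.α_rel_α_apply hx hy hxy _

theorem isRootGroupAt_rootGroup (x : X) : IsRootGroupAt r (D.rootGroup x) x := by
  rw [D.rootGroup_eq_conj_σ]
  simpa only [D.σ_apply_i] using D.isRootGroupAt.conj (D.σ_preserves x)

theorem rootGroup_lm0 {x y : X} (hxy : r.r x y) {g : Perm X} (hg : g ∈ D.rootGroup x) :
    ∃ h ∈ D.rootGroup y, ∀ a, r.r (g a) (h a) := by
  rw [D.rootGroup_eq_conj_σ] at hg ⊢
  obtain ⟨u, hu, rfl⟩ := (Subgroup.mem_smul_pointwise_iff_exists _ _ _).1 hg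
  exact ⟨D.σ y * u * (D.σ y)⁻¹, mul_mul_inv_mem_conj_smul hu,
    rel_conj_apply_of_rel (D.σ_preserves x) (D.isRootGroupAt.preserves u hu)
      (D.σ_rel_σ_apply hxy)⟩

variable (D) in
theorem isLocalPreMoufangSet : IsLocalPreMoufangSet r D.rootGroup where
  big := D.big
  preserves x := (D.isRootGroupAt_rootGroup x).preserves
  lm0 _ _ hxy _ hg := D.rootGroup_lm0 hxy hg
  fixes x := (D.isRootGroupAt_rootGroup x).fixes
  lm1 x := (D.isRootGroupAt_rootGroup x).lm1
  lm1'_trans x := (D.isRootGroupAt_rootGroup x).lm1'_trans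
  lm1'_sharp x := (D.isRootGroupAt_rootGroup x).lm1'_sharp

theorem rootGroup_of_rel_i {x : X} (hx : r.r x D.i) :
    D.rootGroup x = MulAut.conj (D.γ (D.τ⁻¹ x)) • D.U := by
  rw [rootGroup_eq_conj_σ, σ, if_pos hx]

theorem rootGroup_of_not_rel_i {x : X} (hx : ¬ r.r x D.i) :
    D.rootGroup x = MulAut.conj (D.α x) • D.U₀ := by
  rw [rootGroup_eq_conj_σ, σ, if_neg hx, conj_mul_smul]
  rfl

theorem rootGroup_i : D.rootGroup D.i = D.U := by
  rw [D.rootGroup_of_rel_i (r.refl' _), D.τ_inv_i, γ, D.α_o, mul_one, mul_inv_cancel,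
    map_one, one_smul]

theorem rootGroup_o : D.rootGroup D.o = D.U₀ := by
  rw [D.rootGroup_of_not_rel_i D.o_not_rel_i, D.α_o, map_one, one_smul]

variable (D) in
def Transports (g : Perm X) (x : X) : Prop :=
  MulAut.conj g • D.rootGroup x = D.rootGroup (g x)

namespace Transports

variable {g h m s : Perm X} {x y p : X}

theorem comp (hg : D.Transports g y) (hh : D.Transports h x) (hxy : h x = y) :
    D.Transports (g * h) x := by
  subst hxy
  rw [Transports, conj_mul_smul, hh, hg]
  rfl

theorem of_mul (hgh : D.Transports (g * h) x) (hh : D.Transports h x) :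
    D.Transports g (h x) := by
  rw [Transports, ← hh, ← conj_mul_smul]
  exact hgh

theorem inv_s8 (hg : D.Transports g (g⁻¹ x)) : D.Transports g⁻¹ x := by
  rw [Transports, map_inv, inv_smul_eq_iff, hg, Perm.apply_inv_self]

theorem of_conj (hs : D.Transports s p) (hm : D.Transports m p)
    (hc : D.Transports (m * s * m⁻¹) (m p)) : D.Transports m (s p) := by
  have hms : D.Transports (m * s) p := by
    simpa only [inv_mul_cancel_right] using hc.comp hm rfl
  exact hms.of_mul hs

end Transports

variable (D) in
def transporter : Subgroup (Perm X) where
  carrier := {g | ∀ x, D.Transports g x}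
  mul_mem' ha hb x := (ha _).comp (hb x) rfl
  one_mem' x := by simp [Transports]
  inv_mem' ha x := (ha _).inv_s8

theorem transports_of_mem_U_of_not_rel_i {g : Perm X} (hg : g ∈ D.U) {x : X}
    (hx : ¬ r.r x D.i) : D.Transports g x := by
  have hgx : ¬ r.r (g x) D.i := (D.isRootGroupAt.apply_rel_iff hg).not.2 hx
  rw [Transports, D.rootGroup_of_not_rel_i hx, D.rootGroup_of_not_rel_i hgx, ← conj_mul_smul,
    D.α_apply hg hx]

theorem transports_i_of_mem_U {g : Perm X} (hg : g ∈ D.U) : D.Transports g D.i := by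
  rw [Transports, D.isRootGroupAt.fixes g hg, D.rootGroup_i,
    Subgroup.conj_smul_eq_self_of_mem hg]

variable (D) in
/-- The paper's `μ_x = α_x γ_{-(xτ⁻¹)} α_{-((-(xτ⁻¹))τ)}`, written with left actions. -/
def μ (x : X) : Perm X :=
  D.α (negOf D.α D.o (D.τ (negOf D.α D.o (D.τ⁻¹ x)))) * D.γ (negOf D.α D.o (D.τ⁻¹ x)) * D.α x

theorem huaOf_eq_μ_mul_τ (x : X) : huaOf D.α D.τ D.o x = D.μ x * D.τ := by
  simp only [huaOf, μ, γ]
  group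

variable (D) in
def HuaCondition : Prop :=
  ∀ x, ¬ r.r x D.o → ¬ r.r x D.i → MulAut.conj (huaOf D.α D.τ D.o x) • D.U = D.U

section Units

variable {x : X} (hxo : ¬ r.r x D.o) (hxi : ¬ r.r x D.i)
include hxo

theorem τ_inv_apply_not_rel_i_of_not_rel_o : ¬ r.r (D.τ⁻¹ x) D.i :=
  D.τ_inv_apply_rel_i_iff.not.2 hxo

theorem negOf_τ_inv_not_rel_i : ¬ r.r (negOf D.α D.o (D.τ⁻¹ x)) D.i :=
  D.negOf_not_rel_i (τ_inv_apply_not_rel_i_of_not_rel_o hxo)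

theorem γ_negOf_τ_inv : D.γ (negOf D.α D.o (D.τ⁻¹ x)) = (D.γ (D.τ⁻¹ x))⁻¹ := by
  rw [γ, γ, D.α_negOf (τ_inv_apply_not_rel_i_of_not_rel_o hxo)]
  group

theorem γ_τ_inv_apply_i : D.γ (D.τ⁻¹ x) D.i = x := by
  rw [D.γ_apply_i (τ_inv_apply_not_rel_i_of_not_rel_o hxo), Perm.apply_inv_self]

include hxi

theorem τ_negOf_τ_inv_not_rel_i : ¬ r.r (D.τ (negOf D.α D.o (D.τ⁻¹ x))) D.i := by
  rw [← D.γ_apply_i (negOf_τ_inv_not_rel_i hxo), γ_negOf_τ_inv hxo,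
    (D.γ_preserves (τ_inv_apply_not_rel_i_of_not_rel_o hxo)).inv_apply_rel_iff,
    γ_τ_inv_apply_i hxo]
  exact fun h => hxi (r.symm' h)

theorem μ_apply_o : D.μ x D.o = D.i := by
  simp only [μ, Perm.mul_apply]
  rw [D.α_apply_o hxi, γ_negOf_τ_inv hxo, Perm.inv_eq_iff_eq.2 (γ_τ_inv_apply_i hxo).symm,
    D.isRootGroupAt.fixes _ (D.α_mem (D.negOf_not_rel_i (τ_negOf_τ_inv_not_rel_i hxo hxi)))]

theorem μ_apply_i : D.μ x D.i = D.o := by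
  have hw := τ_negOf_τ_inv_not_rel_i hxo hxi
  simp only [μ, Perm.mul_apply]
  rw [D.isRootGroupAt.fixes _ (D.α_mem hxi), D.γ_apply_i (negOf_τ_inv_not_rel_i hxo),
    D.α_negOf hw, Perm.inv_eq_iff_eq.2 (D.α_apply_o hw).symm]

theorem μ_preserves : PreservesRel r (D.μ x) :=
  ((D.isRootGroupAt.preserves _
    (D.α_mem (D.negOf_not_rel_i (τ_negOf_τ_inv_not_rel_i hxo hxi)))).mul_s8
      (D.γ_preserves (negOf_τ_inv_not_rel_i hxo))).mul_s8
    (D.isRootGroupAt.preserves _ (D.α_mem hxi))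

theorem μ_mem_iSup_rootGroup : D.μ x ∈ ⨆ y, D.rootGroup y := by
  have hU : D.U ≤ ⨆ y, D.rootGroup y := D.rootGroup_i ▸ le_iSup D.rootGroup D.i
  have hU₀ : D.U₀ ≤ ⨆ y, D.rootGroup y := D.rootGroup_o ▸ le_iSup D.rootGroup D.o
  exact mul_mem (mul_mem (hU (D.α_mem (D.negOf_not_rel_i (τ_negOf_τ_inv_not_rel_i hxo hxi))))
    (hU₀ (D.γ_mem_U₀ (negOf_τ_inv_not_rel_i hxo)))) (hU (D.α_mem hxi))

theorem rootGroup_eq_conj_γ_of_unit (hua : D.HuaCondition) :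
    D.rootGroup x = MulAut.conj (D.γ (D.τ⁻¹ x)) • D.U := by
  have hc := D.α_mem (D.negOf_not_rel_i (τ_negOf_τ_inv_not_rel_i hxo hxi))
  rw [D.rootGroup_of_not_rel_i hxi, U₀, ← conj_mul_smul,
    show D.α x * D.τ = D.γ (D.τ⁻¹ x) * (D.α (negOf D.α D.o (D.τ (negOf D.α D.o (D.τ⁻¹ x)))))⁻¹ *
        huaOf D.α D.τ D.o x by
      rw [D.huaOf_eq_μ_mul_τ, μ, γ_negOf_τ_inv hxo]; group,
    conj_mul_smul, hua x hxo hxi, conj_mul_smul, Subgroup.conj_smul_eq_self_of_mem (inv_mem hc)]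

end Units

theorem rootGroup_eq_conj_γ (hua : D.HuaCondition) {x : X} (hxo : ¬ r.r x D.o) :
    D.rootGroup x = MulAut.conj (D.γ (D.τ⁻¹ x)) • D.U := by
  by_cases hxi : r.r x D.i
  · exact D.rootGroup_of_rel_i hxi
  · exact rootGroup_eq_conj_γ_of_unit hxo hxi hua

theorem transports_of_mem_U₀_of_not_rel_o (hua : D.HuaCondition) {q : Perm X} (hq : q ∈ D.U₀)
    {x : X} (hx : ¬ r.r x D.o) : D.Transports q x := by
  have hqx : ¬ r.r (q x) D.o := (D.isRootGroupAt_U₀.apply_rel_iff hq).not.2 hx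
  have hγ : q * D.γ (D.τ⁻¹ x) = D.γ (D.τ⁻¹ (q x)) :=
    D.isRootGroupAt_U₀.eq_of_apply_eq
      (mul_mem hq (D.γ_mem_U₀ (τ_inv_apply_not_rel_i_of_not_rel_o hx)))
      (D.γ_mem_U₀ (τ_inv_apply_not_rel_i_of_not_rel_o hqx)) D.i_not_rel_o
      (by rw [Perm.mul_apply, γ_τ_inv_apply_i hx, γ_τ_inv_apply_i hqx])
  rw [Transports, D.rootGroup_eq_conj_γ hua hx, D.rootGroup_eq_conj_γ hua hqx,
    ← conj_mul_smul, hγ]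

theorem transports_μ_o (hua : D.HuaCondition) {x : X} (hxo : ¬ r.r x D.o)
    (hxi : ¬ r.r x D.i) : D.Transports (D.μ x) D.o := by
  have hb := negOf_τ_inv_not_rel_i hxo
  have hw := τ_negOf_τ_inv_not_rel_i hxo hxi
  have h : D.Transports (D.γ (negOf D.α D.o (D.τ⁻¹ x)) * D.α x) D.o :=
    (transports_of_mem_U₀_of_not_rel_o hua (D.γ_mem_U₀ hb) hxo).comp
      (transports_of_mem_U_of_not_rel_i (D.α_mem hxi) D.o_not_rel_i) (D.α_apply_o hxi)
  rw [μ, mul_assoc]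
  refine (transports_i_of_mem_U (D.α_mem (D.negOf_not_rel_i hw))).comp h ?_
  rw [Perm.mul_apply, D.α_apply_o hxi, γ_negOf_τ_inv hxo, Perm.inv_eq_iff_eq,
    γ_τ_inv_apply_i hxo]

theorem transports_μ_i (hua : D.HuaCondition) {x : X} (hxo : ¬ r.r x D.o)
    (hxi : ¬ r.r x D.i) : D.Transports (D.μ x) D.i := by
  have hb := negOf_τ_inv_not_rel_i hxo
  have hw := τ_negOf_τ_inv_not_rel_i hxo hxi
  have h : D.Transports (D.γ (negOf D.α D.o (D.τ⁻¹ x)) * D.α x) D.i :=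
    (transports_of_mem_U₀_of_not_rel_o hua (D.γ_mem_U₀ hb) D.i_not_rel_o).comp
      (transports_i_of_mem_U (D.α_mem hxi)) (D.isRootGroupAt.fixes _ (D.α_mem hxi))
  rw [μ, mul_assoc]
  refine (transports_of_mem_U_of_not_rel_i (D.α_mem (D.negOf_not_rel_i hw)) hw).comp h ?_
  rw [Perm.mul_apply, D.isRootGroupAt.fixes _ (D.α_mem hxi), D.γ_apply_i hb]

variable (D) in
structure IsSwap (m : Perm X) : Prop where
  preserves : PreservesRel r m
  apply_i : m D.i = D.o
  apply_o : m D.o = D.i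
  transports_i : D.Transports m D.i
  transports_o : D.Transports m D.o

theorem exists_isSwap (hua : D.HuaCondition) : ∃ m, D.IsSwap m := by
  obtain ⟨e, heo, hei⟩ := D.exists_unit
  exact ⟨D.μ e, μ_preserves heo hei, μ_apply_i heo hei, μ_apply_o heo hei,
    transports_μ_i hua heo hei, transports_μ_o hua heo hei⟩

namespace IsSwap

variable {m : Perm X} (hm : D.IsSwap m)
include hm

theorem conj_U : MulAut.conj m • D.U = D.U₀ := by
  simpa only [Transports, hm.apply_i, D.rootGroup_i, D.rootGroup_o] using hm.transports_i

theorem conj_U₀ : MulAut.conj m • D.U₀ = D.U := by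
  simpa only [Transports, hm.apply_o, D.rootGroup_i, D.rootGroup_o] using hm.transports_o

theorem transports (hua : D.HuaCondition) (x : X) : D.Transports m x := by
  by_cases hx : r.r x D.i
  · have hz := τ_inv_apply_not_rel_i_of_rel_i hx
    have hγ := D.γ_mem_U₀ hz
    have hc : m * D.γ (D.τ⁻¹ x) * m⁻¹ ∈ D.U := hm.conj_U₀ ▸ mul_mul_inv_mem_conj_smul hγ
    have h := (transports_of_mem_U₀_of_not_rel_o hua hγ D.i_not_rel_o).of_conj hm.transports_i
      (by rw [hm.apply_i]; exact transports_of_mem_U_of_not_rel_i hc D.o_not_rel_i)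
    rwa [D.γ_apply_i hz, Perm.apply_inv_self] at h
  · have hα := D.α_mem hx
    have hc : m * D.α x * m⁻¹ ∈ D.U₀ := hm.conj_U ▸ mul_mul_inv_mem_conj_smul hα
    have h := (transports_of_mem_U_of_not_rel_i hα D.o_not_rel_i).of_conj hm.transports_o
      (by rw [hm.apply_o]; exact transports_of_mem_U₀_of_not_rel_o hua hc D.i_not_rel_o)
    rwa [D.α_apply_o hx] at h

end IsSwap

theorem transports_of_conj_smul_U_eq_self {k : Perm X} (hk : MulAut.conj k • D.U = D.U)
    (hko : D.Transports k D.o) (hkoi : ¬ r.r (k D.o) D.i) {t : X} (ht : ¬ r.r t D.i) :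
    D.Transports k t := by
  have hc : k * D.α t * k⁻¹ ∈ D.U := hk ▸ mul_mul_inv_mem_conj_smul (D.α_mem ht)
  have h := (transports_of_mem_U_of_not_rel_i (D.α_mem ht) D.o_not_rel_i).of_conj hko
    (transports_of_mem_U_of_not_rel_i hc hkoi)
  rwa [D.α_apply_o ht] at h

section UnitCase

variable (hua : D.HuaCondition) {m : Perm X} (hm : D.IsSwap m) {g : Perm X} (hg : g ∈ D.U)
  (hgo : ¬ r.r (g D.o) D.o)
include hua hm hg hgo

/-- `ψ = γ⁻¹ g m` fixes `∞`, so (LM2) for `ψ` at `∞` says that `ψ` normalizes `U`. -/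
theorem transports_γ_inv_mul_mul_swap {t : X} (ht : ¬ r.r t D.i) :
    D.Transports ((D.γ (D.τ⁻¹ (g D.o)))⁻¹ * g * m) t := by
  have hγ := inv_mem (D.γ_mem_U₀ (τ_inv_apply_not_rel_i_of_not_rel_o hgo))
  have hγi := γ_τ_inv_apply_i hgo
  have hψi : ((D.γ (D.τ⁻¹ (g D.o)))⁻¹ * g * m) D.i = D.i := by
    rw [Perm.mul_apply, Perm.mul_apply, hm.apply_i, Perm.inv_eq_iff_eq, hγi]
  have hψ_i : D.Transports ((D.γ (D.τ⁻¹ (g D.o)))⁻¹ * g * m) D.i :=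
    ((transports_of_mem_U₀_of_not_rel_o hua hγ hgo).comp
      (transports_of_mem_U_of_not_rel_i hg D.o_not_rel_i) rfl).comp hm.transports_i hm.apply_i
  have hψ_o : D.Transports ((D.γ (D.τ⁻¹ (g D.o)))⁻¹ * g * m) D.o :=
    ((transports_of_mem_U₀_of_not_rel_o hua hγ D.i_not_rel_o).comp
      (transports_i_of_mem_U hg) (D.isRootGroupAt.fixes g hg)).comp hm.transports_o hm.apply_o
  refine transports_of_conj_smul_U_eq_self ?_ hψ_o ?_ ht
  · simpa only [Transports, hψi, D.rootGroup_i] using hψ_i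
  · rw [Perm.mul_apply, Perm.mul_apply, hm.apply_o, D.isRootGroupAt.fixes g hg]
    intro h
    have h' := (D.γ_preserves (τ_inv_apply_not_rel_i_of_not_rel_o hgo)).rel_iff.2 h
    rw [Perm.apply_inv_self, hγi] at h'
    exact (D.isRootGroupAt.apply_rel_iff hg).not.2 D.o_not_rel_i (r.symm' h')

theorem transports_of_mem_U_of_rel_i_of_unit {x : X} (hx : r.r x D.i) : D.Transports g x := by
  have hmx : ¬ r.r (m⁻¹ x) D.i := by
    rw [hm.preserves.inv_apply_rel_iff, hm.apply_i]
    exact D.not_rel_o_of_rel_i hx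
  have hψx : ¬ r.r (((D.γ (D.τ⁻¹ (g D.o)))⁻¹ * g * m) (m⁻¹ x)) D.o := by
    rw [Perm.mul_apply, Perm.apply_inv_self, Perm.mul_apply, D.isRootGroupAt_U₀.apply_rel_iff
      (inv_mem (D.γ_mem_U₀ (τ_inv_apply_not_rel_i_of_not_rel_o hgo)))]
    exact D.not_rel_o_of_rel_i ((D.isRootGroupAt.apply_rel_iff hg).2 hx)
  have h := ((transports_of_mem_U₀_of_not_rel_o hua
    (D.γ_mem_U₀ (τ_inv_apply_not_rel_i_of_not_rel_o hgo)) hψx).comp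
    (transports_γ_inv_mul_mul_swap hua hm hg hgo hmx) rfl).comp
    (hm.transports hua (m⁻¹ x)).inv_s8 rfl
  simpa only [mul_assoc, mul_inv_cancel_left, mul_inv_cancel, mul_one] using h

end UnitCase

theorem U_le_transporter (hua : D.HuaCondition) : D.U ≤ D.transporter := by
  intro g hg x
  by_cases hx : ¬ r.r x D.i
  · exact transports_of_mem_U_of_not_rel_i hg hx
  rw [not_not] at hx
  obtain ⟨m, hm⟩ := D.exists_isSwap hua
  by_cases hgo : ¬ r.r (g D.o) D.o
  · exact transports_of_mem_U_of_rel_i_of_unit hua hm hg hgo hx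
  rw [not_not] at hgo
  -- `g = (g α_e) α_e⁻¹` for a unit `e`, and both factors move `0` to a unit
  obtain ⟨e, heo, hei⟩ := D.exists_unit
  have hα := D.α_mem hei
  have h₁ : ¬ r.r ((D.α e)⁻¹ D.o) D.o := by
    rw [(D.isRootGroupAt.preserves _ hα).inv_apply_rel_iff, D.α_apply_o hei]
    exact fun h => heo (r.symm' h)
  have h₂ : ¬ r.r ((g * D.α e) D.o) D.o := by
    rw [Perm.mul_apply, D.α_apply_o hei]
    have hge := D.isRootGroupAt.rel_apply_self hg D.o_not_rel_i hgo e
    exact fun h => heo (r.trans' (r.symm' hge) h)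
  have hx' : r.r ((D.α e)⁻¹ x) D.i := (D.isRootGroupAt.apply_rel_iff (inv_mem hα)).2 hx
  simpa only [mul_inv_cancel_right] using
    (transports_of_mem_U_of_rel_i_of_unit hua hm (mul_mem hg hα) h₂ hx').comp
      (transports_of_mem_U_of_rel_i_of_unit hua hm (inv_mem hα) h₁ hx) rfl

theorem U₀_le_transporter (hua : D.HuaCondition) : D.U₀ ≤ D.transporter := by
  obtain ⟨m, hm⟩ := D.exists_isSwap hua
  have hm' : m ∈ D.transporter := hm.transports hua
  rw [← hm.conj_U]
  exact Subgroup.conj_smul_le_of_le (U_le_transporter hua) ⟨m, hm'⟩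

theorem iSup_rootGroup_le_transporter (hua : D.HuaCondition) :
    ⨆ y, D.rootGroup y ≤ D.transporter := by
  refine iSup_le fun y => ?_
  by_cases hy : r.r y D.i
  · rw [D.rootGroup_of_rel_i hy]
    exact Subgroup.conj_smul_le_of_le (U_le_transporter hua)
      ⟨_, U₀_le_transporter hua (D.γ_mem_U₀ (τ_inv_apply_not_rel_i_of_rel_i hy))⟩
  · rw [D.rootGroup_of_not_rel_i hy]
    exact Subgroup.conj_smul_le_of_le (U₀_le_transporter hua)
      ⟨_, U_le_transporter hua (D.α_mem hy)⟩

theorem huaCondition_of_isLocalMoufangSet (hM : IsLocalMoufangSet r D.rootGroup) :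
    D.HuaCondition := by
  intro x hxo hxi
  have h := hM.lm2 D.o (D.μ x) (μ_mem_iSup_rootGroup hxo hxi)
  rw [μ_apply_o hxo hxi, D.rootGroup_o, D.rootGroup_i] at h
  rw [D.huaOf_eq_μ_mul_τ, conj_mul_smul]
  exact h

theorem isLocalMoufangSet_iff : IsLocalMoufangSet r D.rootGroup ↔ D.HuaCondition :=
  ⟨huaCondition_of_isLocalMoufangSet, fun hua =>
    { D.isLocalPreMoufangSet with lm2 := fun x _ hg => iSup_rootGroup_le_transporter hua hg x }⟩

end Construction

end LocalMoufang

/-- the construction `M(U, τ)` from a set with equivalence relation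
`(X, ∼)` with more than 2 classes, a group `U ≤ Sym(X, ∼)` and `τ ∈ Sym(X, ∼)`
satisfying (C1), (C1') and (C2) is a local Moufang set if and only if all Hua maps
`h_x` of units `x` normalize `U`. -/
theorem statement8 (r : Setoid X) (U : Subgroup (Equiv.Perm X)) (τ : Equiv.Perm X)
    (i : X) (α : X → Equiv.Perm X)
    (big : ∃ a b c : X, ¬ r.r a b ∧ ¬ r.r a c ∧ ¬ r.r b c)
    (hU : ∀ g ∈ U, PreservesRel r g) (hτp : PreservesRel r τ)
    -- (C1)
    (c1fix : ∀ g ∈ U, g i = i)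
    (c1 : ∀ a b : X, ¬ r.r a i → ¬ r.r b i → ∃! g : Equiv.Perm X, g ∈ U ∧ g a = b)
    -- (C1')
    (c1't : ∀ a b : X, ¬ r.r a i → ¬ r.r b i → ∃ g ∈ U, r.r (g a) b)
    (c1's : ∀ g ∈ U, ∀ h ∈ U, ∀ a : X, ¬ r.r a i → r.r (g a) (h a) →
      ∀ b : X, r.r (g b) (h b))
    -- (C2): `∞τ ≁ ∞` and `∞τ² = ∞`; we write `0 := ∞τ = τ i`
    (c2 : ¬ r.r (τ i) i ∧ τ (τ i) = i)
    -- `α x` is the unique element of `U` mapping `0` to `x`, for `x ≁ ∞`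
    (hα : ∀ x : X, ¬ r.r x i → α x ∈ U ∧ α x (τ i) = x) :
    IsLocalMoufangSet r (constructedU r U τ α i) ↔
      ∀ x : X, ¬ r.r x (τ i) → ¬ r.r x i →
        ∀ u : Equiv.Perm X, u ∈ U ↔ huaOf α τ (τ i) x * u * (huaOf α τ (τ i) x)⁻¹ ∈ U := by
  let D : LocalMoufang.Construction r :=
    ⟨U, τ, i, α, big, ⟨hU, c1fix, c1, c1't, c1's⟩, hτp, c2, hα⟩
  have h := D.isLocalMoufangSet_iff
  simp only [LocalMoufang.Construction.HuaCondition, LocalMoufang.conj_smul_eq_self_iff] at h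
  exact h
end

section
/- Let φ: M₁ → M₂ be a homomorphism of local Moufang sets. Then φ is injective if and only if the induced root-group homomorphism θ_x: U_x → V_{xφ} is injective for all x ∈ X, if and only if θ_x is injective for some x ∈ X. Analogously, φ is surjective if and only if θ_x is surjective for all (equivalently, some) x. -/
/-!
Local Moufang sets, following E. Rijcken, "Local Moufang sets".
A local Moufang set is a set `X` with an equivalence relation (a `Setoid`)
having more than 2 classes, together with root groups `U x` of
equivalence-preserving permutations, satisfying (LM0), (LM1), (LM1'), (LM2).
We use left actions; the paper's right-composition word `a₁a₂⋯aₙ` corresponds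
to our product `aₙ * ⋯ * a₁`, and the paper's conjugation `g^h = h⁻¹gh`
corresponds to `h * g * h⁻¹` (i.e. `MulAut.conj h g`).
-/

variable {X : Type*}

/-- A homomorphism of local Moufang sets `(X, r, U) → (Y, s, V)`: an
equivalence-and-nonequivalence-preserving map `φ` with `U_x φ ⊆ φ V_{xφ}`, i.e.
every `u ∈ U x` is intertwined by `φ` with some `v ∈ V (φ x)`. -/
def IsLMSHom {X Y : Type*} (r : Setoid X) (s : Setoid Y)
    (U : X → Subgroup (Equiv.Perm X)) (V : Y → Subgroup (Equiv.Perm Y))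
    (φ : X → Y) : Prop :=
  (∀ a b : X, r.r a b ↔ s.r (φ a) (φ b)) ∧
  ∀ x : X, ∀ u ∈ U x, ∃ v ∈ V (φ x), ∀ p : X, φ (u p) = v (φ p)

section AuxLemmas

lemma third_class {Z : Type*} {t : Setoid Z}
    (hbig : ∃ a b c : Z, ¬ t.r a b ∧ ¬ t.r a c ∧ ¬ t.r b c)
    (x z : Z) : ∃ p : Z, ¬ t.r p x ∧ ¬ t.r p z := by
  obtain ⟨a, b, c, hab, hac, hbc⟩ := hbig
  by_cases hax : t.r a x
  · by_cases hbz : t.r b z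
    · exact ⟨c, fun h => hac (t.iseqv.trans hax (t.iseqv.symm h)),
        fun h => hbc (t.iseqv.trans hbz (t.iseqv.symm h))⟩
    · exact ⟨b, fun h => hab (t.iseqv.trans hax (t.iseqv.symm h)), hbz⟩
  · by_cases haz : t.r a z
    · by_cases hbx : t.r b x
      · exact ⟨c, fun h => hbc (t.iseqv.trans hbx (t.iseqv.symm h)),
          fun h => hac (t.iseqv.trans haz (t.iseqv.symm h))⟩
      · by_cases hbz : t.r b z
        · exact absurd (t.iseqv.trans haz (t.iseqv.symm hbz)) hab
        · exact ⟨b, hbx, hbz⟩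
    · exact ⟨a, hax, haz⟩

lemma sharp_eq {Z : Type*} {t : Setoid Z} {W : Z → Subgroup (Equiv.Perm Z)}
    (h : IsLocalMoufangSet t W) {y q : Z} (hq : ¬ t.r q y)
    {v v' : Equiv.Perm Z} (hv : v ∈ W y) (hv' : v' ∈ W y) (heq : v q = v' q) : v = v' := by
  have hfix := h.fixes y v hv
  have hvq : ¬ t.r (v q) y := fun h' => hq ((h.preserves y v hv q y).mpr (by rwa [hfix]))
  obtain ⟨g, -, hg⟩ := h.lm1 y q (v q) hq hvq
  exact (hg v ⟨hv, rfl⟩).trans (hg v' ⟨hv', heq.symm⟩).symm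

lemma eq_one_of_fixes {Z : Type*} {t : Setoid Z} {W : Z → Subgroup (Equiv.Perm Z)}
    (h : IsLocalMoufangSet t W) {y q : Z} (hq : ¬ t.r q y)
    {v : Equiv.Perm Z} (hv : v ∈ W y) (heq : v q = q) : v = 1 :=
  sharp_eq h hq hv (W y).one_mem (by simpa using heq)

lemma lms_inj {X Y : Type*} {r : Setoid X} {s : Setoid Y}
    {U : X → Subgroup (Equiv.Perm X)} {V : Y → Subgroup (Equiv.Perm Y)}
    (h1 : IsLocalMoufangSet r U) (h2 : IsLocalMoufangSet s V)
    {φ : X → Y} (hφ : IsLMSHom r s U V φ) {x : X}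
    (hx : ∀ u ∈ U x, (∀ p : X, φ (u p) = φ p) → u = 1) :
    Function.Injective φ := by
  have key : ∀ a b : X, ¬ r.r a x → φ a = φ b → a = b := by
    intro a b hax heq
    have hab : r.r a b := (hφ.1 a b).mpr (heq ▸ s.iseqv.refl _)
    have hbx : ¬ r.r b x := fun h => hax (r.iseqv.trans hab h)
    obtain ⟨u, ⟨hu, hua⟩, -⟩ := h1.lm1 x a b hax hbx
    obtain ⟨v, hv, hiv⟩ := hφ.2 x u hu
    have hqa : ¬ s.r (φ a) (φ x) := fun h => hax ((hφ.1 a x).mpr h)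
    have hv1 : v = 1 := eq_one_of_fixes h2 hqa hv (by rw [← hiv a, hua]; exact heq.symm)
    have hker : ∀ p, φ (u p) = φ p := by intro p; rw [hiv p, hv1]; simp
    have hu1 := hx u hu hker
    rw [← hua, hu1]; simp
  intro a b heq
  by_cases hax : r.r a x
  · obtain ⟨z, hzx, -⟩ := third_class h1.big x x
    obtain ⟨p2, hpz, hpx⟩ := third_class h1.big z x
    have haz : ¬ r.r a z := fun h => hzx (r.iseqv.trans (r.iseqv.symm h) hax)
    obtain ⟨w, ⟨hw, hwa⟩, -⟩ := h1.lm1 z a p2 haz hpz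
    obtain ⟨v, hv, hiv⟩ := hφ.2 z w hw
    have hweq : φ (w a) = φ (w b) := by rw [hiv a, hiv b, heq]
    exact w.injective (key (w a) (w b) (by rw [hwa]; exact hpx) hweq)
  · exact key a b hax heq

lemma lms_partial_surj {X Y : Type*} {r : Setoid X} {s : Setoid Y}
    {U : X → Subgroup (Equiv.Perm X)} {V : Y → Subgroup (Equiv.Perm Y)}
    (h1 : IsLocalMoufangSet r U) (h2 : IsLocalMoufangSet s V)
    {φ : X → Y} (hφ : IsLMSHom r s U V φ) {x : X}
    (hx : ∀ v ∈ V (φ x), ∃ u ∈ U x, ∀ p : X, φ (u p) = v (φ p)) :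
    ∀ q : Y, ¬ s.r q (φ x) → ∃ p, φ p = q := by
  intro q hq
  obtain ⟨a, hax, -⟩ := third_class h1.big x x
  have hfa : ¬ s.r (φ a) (φ x) := fun h => hax ((hφ.1 a x).mpr h)
  obtain ⟨v, ⟨hv, hva⟩, -⟩ := h2.lm1 (φ x) (φ a) q hfa hq
  obtain ⟨u, hu, hiu⟩ := hx v hv
  exact ⟨u a, by rw [hiu a, hva]⟩

lemma lms_theta_surj {X Y : Type*} {r : Setoid X} {s : Setoid Y}
    {U : X → Subgroup (Equiv.Perm X)} {V : Y → Subgroup (Equiv.Perm Y)}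
    (h1 : IsLocalMoufangSet r U) (h2 : IsLocalMoufangSet s V)
    {φ : X → Y} (hφ : IsLMSHom r s U V φ) {x₀ : X}
    (hsur : ∀ q : Y, ¬ s.r q (φ x₀) → ∃ p, φ p = q) :
    ∀ b : X, ∀ v ∈ V (φ b), ∃ u ∈ U b, ∀ p : X, φ (u p) = v (φ p) := by
  intro b v hv
  obtain ⟨a, hab, -⟩ := third_class h1.big b b
  obtain ⟨a', ha'b, hvq⟩ : ∃ a', ¬ r.r a' b ∧ ¬ s.r (v (φ a')) (φ x₀) := by
    by_cases hq : s.r (v (φ a)) (φ x₀)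
    · obtain ⟨a'', ha''a, ha''b⟩ := third_class h1.big a b
      refine ⟨a'', ha''b, fun h => ha''a ?_⟩
      have hva : s.r (v (φ a'')) (v (φ a)) := s.iseqv.trans h (s.iseqv.symm hq)
      exact (hφ.1 a'' a).mpr ((h2.preserves (φ b) v hv _ _).mpr hva)
    · exact ⟨a, hab, hq⟩
  obtain ⟨c, hc⟩ := hsur _ hvq
  have hfab : ¬ s.r (φ a') (φ b) := fun h => ha'b ((hφ.1 a' b).mpr h)
  have hvfab : ¬ s.r (v (φ a')) (φ b) := fun h =>
    hfab ((h2.preserves (φ b) v hv _ _).mpr (by rwa [h2.fixes (φ b) v hv]))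
  have hcb : ¬ r.r c b := fun h => hvfab (hc ▸ (hφ.1 c b).mp h)
  obtain ⟨u, ⟨hu, hua⟩, -⟩ := h1.lm1 b a' c ha'b hcb
  obtain ⟨v', hv', hiv⟩ := hφ.2 b u hu
  have hvv : v' = v := sharp_eq h2 hfab hv' hv (by rw [← hiv a', hua, hc])
  exact ⟨u, hu, fun p => by rw [hiv p, hvv]⟩

end AuxLemmas

/-- a homomorphism `φ` of local Moufang sets is injective iff all
(equivalently, some) induced root group homomorphisms `θ_x : U x → V (φ x)` are
injective, and surjective iff all (equivalently, some) `θ_x` are surjective.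
(`θ_x` is determined by `u φ = φ θ_x(u)`; its injectivity amounts to triviality of
its kernel `{u ∈ U x : φ ∘ u = φ}`, and its surjectivity to every `v ∈ V (φ x)`
being intertwined with some `u ∈ U x`.) -/
theorem statement9 {X Y : Type*} (r : Setoid X) (s : Setoid Y)
    (U : X → Subgroup (Equiv.Perm X)) (V : Y → Subgroup (Equiv.Perm Y))
    (h1 : IsLocalMoufangSet r U) (h2 : IsLocalMoufangSet s V)
    (φ : X → Y) (hφ : IsLMSHom r s U V φ) :
    (Function.Injective φ ↔ ∀ x : X, ∀ u ∈ U x, (∀ p : X, φ (u p) = φ p) → u = 1) ∧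
    ((∃ x : X, ∀ u ∈ U x, (∀ p : X, φ (u p) = φ p) → u = 1) → Function.Injective φ) ∧
    (Function.Surjective φ ↔
      ∀ x : X, ∀ v ∈ V (φ x), ∃ u ∈ U x, ∀ p : X, φ (u p) = v (φ p)) ∧
    ((∃ x : X, ∀ v ∈ V (φ x), ∃ u ∈ U x, ∀ p : X, φ (u p) = v (φ p)) →
      Function.Surjective φ) := by
  obtain ⟨x₀, -, -, -, -, -⟩ := h1.big
  have hpick : ∀ q : Y, ∃ b : X, ¬ s.r q (φ b) := by
    obtain ⟨a, b, c, hab, -, -⟩ := h1.big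
    intro q
    by_cases hqa : s.r q (φ a)
    · exact ⟨b, fun h => hab ((hφ.1 a b).mpr (s.iseqv.trans (s.iseqv.symm hqa) h))⟩
    · exact ⟨a, hqa⟩
  have surj_of_some : (∃ x : X, ∀ v ∈ V (φ x), ∃ u ∈ U x, ∀ p : X, φ (u p) = v (φ p)) →
      Function.Surjective φ := by
    rintro ⟨x, hx⟩
    have hpart := lms_partial_surj h1 h2 hφ hx
    have hall := lms_theta_surj h1 h2 hφ hpart
    intro q
    obtain ⟨b, hb⟩ := hpick q
    exact lms_partial_surj h1 h2 hφ (hall b) q hb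
  refine ⟨⟨?_, ?_⟩, ?_, ⟨?_, ?_⟩, surj_of_some⟩
  · intro hinj x u hu hker
    exact Equiv.ext fun p => by simpa using hinj (hker p)
  · intro h
    exact lms_inj h1 h2 hφ (h x₀)
  · rintro ⟨x, hx⟩
    exact lms_inj h1 h2 hφ hx
  · intro hsur b v hv
    exact lms_theta_surj h1 h2 hφ (x₀ := x₀) (fun q _ => hsur q) b v hv
  · intro h
    exact surj_of_some ⟨x₀, h x₀⟩
end

section
/- Let (M_i, φ_{ij}) be a surjective inverse system of local Moufang sets over a directed set I admitting a cofinal sequence. Then every projection map p_j : lim← X_i → X_j is surjective; in particular the quotient set lim← X_i has more than 2 equivalence classes and the inverse limit lim← M_i exists as a local Moufang set. -/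
/-!
Local Moufang sets, following E. Rijcken, "Local Moufang sets".
A local Moufang set is a set `X` with an equivalence relation (a `Setoid`)
having more than 2 classes, together with root groups `U x` of
equivalence-preserving permutations, satisfying (LM0), (LM1), (LM1'), (LM2).
We use left actions; the paper's right-composition word `a₁a₂⋯aₙ` corresponds
to our product `aₙ * ⋯ * a₁`, and the paper's conjugation `g^h = h⁻¹gh`
corresponds to `h * g * h⁻¹` (i.e. `MulAut.conj h g`).
-/

variable {X : Type*}

variable {I : Type*} [Preorder I]

/-- The inverse limit set of an inverse system of sets `Xf i` with transition maps
`φf i j : Xf i → Xf j` for `j ≤ i`. -/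
def InvLim (Xf : I → Type*) (φf : ∀ i j : I, j ≤ i → Xf i → Xf j) : Type _ :=
  {x : ∀ i, Xf i // ∀ (i j : I) (h : j ≤ i), φf i j h (x i) = x j}

/-- The equivalence relation on the inverse limit: two threads are equivalent iff
they are equivalent in every (equivalently, by surjectivity and directedness,
in some) component. -/
def invLimSetoid (Xf : I → Type*) (rf : ∀ i, Setoid (Xf i))
    (φf : ∀ i j : I, j ≤ i → Xf i → Xf j) : Setoid (InvLim Xf φf) :=
  ⟨fun x y => ∀ i : I, (rf i).r (x.1 i) (y.1 i),
    ⟨fun _ i => (rf i).iseqv.refl _,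
     fun h i => (rf i).iseqv.symm (h i),
     fun h h' i => (rf i).iseqv.trans (h i) (h' i)⟩⟩

/-!
A thread through the inverse limit is built by lifting a point step by step along the cofinal
sequence; this is where countability enters. Root groups on the limit consist of the
permutations acting in every component through an element of the corresponding root group.
Sharp transitivity (LM1) in each component makes the elements it produces compatible with the
transition maps, so they assemble to permutations of the limit; the other axioms are then
checked componentwise.
-/

open Function

theorem Setoid.exists_not_rel_of_not_rel {α : Type*} (r : Setoid α) {a b : α} (hab : ¬ r.r a b)
    (x : α) : ∃ c, ¬ r.r c x := by
  by_cases hax : r.r a x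
  · exact ⟨b, fun hbx => hab (r.iseqv.trans hax (r.iseqv.symm hbx))⟩
  · exact ⟨a, hax⟩

theorem exists_three_not_rel_of_surjective {α β : Type*} {r : Setoid α} {s : Setoid β}
    {π : α → β} (hπ : ∀ a b, r.r a b → s.r (π a) (π b)) (hsurj : Surjective π)
    (h : ∃ a b c : β, ¬ s.r a b ∧ ¬ s.r a c ∧ ¬ s.r b c) :
    ∃ a b c : α, ¬ r.r a b ∧ ¬ r.r a c ∧ ¬ r.r b c := by
  obtain ⟨a, b, c, hab, hac, hbc⟩ := h
  obtain ⟨a', rfl⟩ := hsurj a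
  obtain ⟨b', rfl⟩ := hsurj b
  obtain ⟨c', rfl⟩ := hsurj c
  exact ⟨a', b', c', mt (hπ _ _) hab, mt (hπ _ _) hac, mt (hπ _ _) hbc⟩

theorem map_conj_eq_of_conj_mem {α : Type*} {W : α → Subgroup (Equiv.Perm α)}
    (hW : ∀ y, ∀ g ∈ W y, ∀ x, ∀ k ∈ W x, g * k * g⁻¹ ∈ W (g x)) :
    ∀ x, ∀ g ∈ ⨆ y, W y, (W x).map (MulAut.conj g).toMonoidHom = W (g x) := by
  have hle : ∀ g ∈ ⨆ y, W y, ∀ x, (W x).map (MulAut.conj g).toMonoidHom ≤ W (g x) := by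
    intro g hg
    refine Subgroup.iSup_induction W
      (C := fun g => ∀ x, (W x).map (MulAut.conj g).toMonoidHom ≤ W (g x)) hg ?_ ?_ ?_
    · rintro y g hg x _ ⟨k, hk, rfl⟩
      exact hW y g hg x k hk
    · rintro x _ ⟨k, hk, rfl⟩
      simpa using hk
    · rintro g h hg hh x _ ⟨k, hk, rfl⟩
      simpa [mul_assoc] using hg (h x) ⟨_, hh x ⟨k, hk, rfl⟩, rfl⟩
  refine fun x g hg => (hle g hg x).antisymm fun k hk => ⟨g⁻¹ * k * g, ?_, ?_⟩
  · simpa using hle g⁻¹ (inv_mem hg) (g x) ⟨k, hk, rfl⟩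
  · simp only [MulEquiv.coe_toMonoidHom, MulAut.conj_apply]
    group

namespace InvLim

variable {Xf : I → Type*} {φf : ∀ i j : I, j ≤ i → Xf i → Xf j}

section Surjectivity

variable {f : ℕ → I}

theorem exists_seq_lift (hsurj : ∀ (i j : I) (h : j ≤ i), Surjective (φf i j h))
    (hmono : Monotone f) (z₀ : Xf (f 0)) :
    ∃ z : ∀ n, Xf (f n), z 0 = z₀ ∧
      ∀ n, φf (f (n + 1)) (f n) (hmono n.le_succ) (z (n + 1)) = z n := by
  choose lift hlift using fun n => hsurj (f (n + 1)) (f n) (hmono n.le_succ)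
  exact ⟨fun n => Nat.rec (motive := fun n => Xf (f n)) z₀ (fun n zn => lift n zn) n, rfl,
    fun n => hlift n _⟩

theorem map_seq_eq_of_le
    (hcomp : ∀ (i j k : I) (hji : j ≤ i) (hkj : k ≤ j) (x : Xf i),
      φf j k hkj (φf i j hji x) = φf i k (hkj.trans hji) x)
    {hmono : Monotone f} {z : ∀ n, Xf (f n)}
    (hz : ∀ n, φf (f (n + 1)) (f n) (hmono n.le_succ) (z (n + 1)) = z n)
    {n m : ℕ} (hnm : n ≤ m) {i : I} (hn : i ≤ f n) (hm : i ≤ f m) :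
    φf (f m) i hm (z m) = φf (f n) i hn (z n) := by
  induction m, hnm using Nat.le_induction with
  | base => rfl
  | succ m hnm ih =>
    rw [← ih (hn.trans (hmono hnm)), ← hz m, hcomp]

theorem map_seq_eq
    (hcomp : ∀ (i j k : I) (hji : j ≤ i) (hkj : k ≤ j) (x : Xf i),
      φf j k hkj (φf i j hji x) = φf i k (hkj.trans hji) x)
    {hmono : Monotone f} {z : ∀ n, Xf (f n)}
    (hz : ∀ n, φf (f (n + 1)) (f n) (hmono n.le_succ) (z (n + 1)) = z n)
    (n m : ℕ) {i : I} (hn : i ≤ f n) (hm : i ≤ f m) :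
    φf (f m) i hm (z m) = φf (f n) i hn (z n) := by
  rcases le_total n m with hnm | hmn
  · exact map_seq_eq_of_le hcomp hz hnm hn hm
  · exact (map_seq_eq_of_le hcomp hz hmn hm hn).symm

theorem exists_thread_of_seq
    (hcomp : ∀ (i j k : I) (hji : j ≤ i) (hkj : k ≤ j) (x : Xf i),
      φf j k hkj (φf i j hji x) = φf i k (hkj.trans hji) x)
    {hmono : Monotone f} (hcof : ∀ i : I, ∃ n : ℕ, i ≤ f n) {z : ∀ n, Xf (f n)}
    (hz : ∀ n, φf (f (n + 1)) (f n) (hmono n.le_succ) (z (n + 1)) = z n) :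
    ∃ x : InvLim Xf φf, ∀ n i (hi : i ≤ f n), x.1 i = φf (f n) i hi (z n) := by
  choose N hN using hcof
  refine ⟨⟨fun i => φf (f (N i)) i (hN i) (z (N i)), fun i j h => ?_⟩,
    fun n i hi => map_seq_eq hcomp hz n (N i) hi (hN i)⟩
  rw [hcomp]
  exact map_seq_eq hcomp hz (N j) (N i) _ _

theorem surjective_proj
    (hcomp : ∀ (i j k : I) (hji : j ≤ i) (hkj : k ≤ j) (x : Xf i),
      φf j k hkj (φf i j hji x) = φf i k (hkj.trans hji) x)
    (hsurj : ∀ (i j : I) (h : j ≤ i), Surjective (φf i j h))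
    (hmono : Monotone f) (hcof : ∀ i : I, ∃ n : ℕ, i ≤ f n) (j : I) :
    Surjective fun x : InvLim Xf φf => x.1 j := by
  intro x₀
  obtain ⟨n₀, hj⟩ := hcof j
  -- restart the sequence at `n₀`, so that the lifted sequence begins above `j`
  have hmono' : Monotone fun n => f (n₀ + n) :=
    fun a b hab => hmono (Nat.add_le_add_left hab n₀)
  have hcof' : ∀ i : I, ∃ n, i ≤ f (n₀ + n) :=
    fun i => (hcof i).imp fun n hn => hn.trans (hmono (Nat.le_add_left n n₀))
  obtain ⟨z₀, hz₀⟩ := hsurj _ j hj x₀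
  obtain ⟨z, rfl, hz⟩ := exists_seq_lift hsurj hmono' z₀
  obtain ⟨x, hx⟩ := exists_thread_of_seq hcomp hcof' hz
  exact ⟨x, (hx 0 j hj).trans hz₀⟩

end Surjectivity

section RootGroups

variable {rf : ∀ i, Setoid (Xf i)} {Uf : ∀ i, Xf i → Subgroup (Equiv.Perm (Xf i))}

theorem invLimSetoid_r {a b : InvLim Xf φf} :
    (invLimSetoid Xf rf φf).r a b ↔ ∀ i, (rf i).r (a.1 i) (b.1 i) :=
  Iff.rfl

theorem invLimSetoid_r_iff [IsDirected I (· ≤ ·)]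
    (hrel : ∀ (i j : I) (h : j ≤ i) (a b : Xf i),
      (rf i).r a b ↔ (rf j).r (φf i j h a) (φf i j h b))
    {a b : InvLim Xf φf} (j : I) :
    (invLimSetoid Xf rf φf).r a b ↔ (rf j).r (a.1 j) (b.1 j) := by
  have hmono : ∀ i j (h : j ≤ i), (rf i).r (a.1 i) (b.1 i) ↔ (rf j).r (a.1 j) (b.1 j) :=
    fun i j h => by rw [hrel i j h, a.2, b.2]
  refine ⟨fun hab => hab j, fun hj i => ?_⟩
  obtain ⟨k, hik, hjk⟩ := directed_of (· ≤ ·) i j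
  exact (hmono k i hik).1 ((hmono k j hjk).2 hj)

def IsInducedBy (g : Equiv.Perm (InvLim Xf φf)) (u : ∀ i, Equiv.Perm (Xf i)) : Prop :=
  ∀ p i, (g p).1 i = u i (p.1 i)

theorem IsInducedBy.mul {g h : Equiv.Perm (InvLim Xf φf)} {u v : ∀ i, Equiv.Perm (Xf i)}
    (hg : IsInducedBy g u) (hh : IsInducedBy h v) :
    IsInducedBy (g * h) fun i => u i * v i := fun p i => by
  rw [Equiv.Perm.mul_apply, hg, hh, Equiv.Perm.mul_apply]

theorem IsInducedBy.inv {g : Equiv.Perm (InvLim Xf φf)} {u : ∀ i, Equiv.Perm (Xf i)}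
    (hg : IsInducedBy g u) : IsInducedBy g⁻¹ fun i => (u i)⁻¹ := fun p i => by
  rw [Equiv.Perm.eq_inv_iff_eq, ← hg]
  simp

def rootGroup (Uf : ∀ i, Xf i → Subgroup (Equiv.Perm (Xf i))) (x : InvLim Xf φf) :
    Subgroup (Equiv.Perm (InvLim Xf φf)) where
  carrier := {g | ∃ u : ∀ i, Equiv.Perm (Xf i), (∀ i, u i ∈ Uf i (x.1 i)) ∧
    IsInducedBy g u}
  one_mem' := ⟨fun _ => 1, fun _ => one_mem _, fun _ _ => rfl⟩
  mul_mem' := fun ⟨_, hu, hgu⟩ ⟨_, hv, hhv⟩ =>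
    ⟨_, fun i => mul_mem (hu i) (hv i), hgu.mul hhv⟩
  inv_mem' := fun ⟨_, hu, hgu⟩ => ⟨_, fun i => inv_mem (hu i), hgu.inv⟩

def IsCompat (φf : ∀ i j : I, j ≤ i → Xf i → Xf j) (u : ∀ i, Equiv.Perm (Xf i)) : Prop :=
  ∀ (i j : I) (h : j ≤ i) (p : Xf i), φf i j h (u i p) = u j (φf i j h p)

theorem IsCompat.inv {u : ∀ i, Equiv.Perm (Xf i)} (hu : IsCompat φf u) :
    IsCompat φf fun i => (u i)⁻¹ := fun i j h p => by
  rw [Equiv.Perm.eq_inv_iff_eq, ← hu]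
  simp

def compatPerm (u : ∀ i, Equiv.Perm (Xf i)) (hu : IsCompat φf u) :
    Equiv.Perm (InvLim Xf φf) where
  toFun p := ⟨fun i => u i (p.1 i), fun i j h => by rw [hu, p.2]⟩
  invFun p := ⟨fun i => (u i)⁻¹ (p.1 i), fun i j h => by rw [hu.inv, p.2]⟩
  left_inv p := Subtype.ext <| funext fun i => (u i).symm_apply_apply _
  right_inv p := Subtype.ext <| funext fun i => (u i).apply_symm_apply _

theorem isInducedBy_compatPerm {u : ∀ i, Equiv.Perm (Xf i)} (hu : IsCompat φf u) :
    IsInducedBy (compatPerm u hu) u :=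
  fun _ _ => rfl

theorem preservesRel_of_mem_rootGroup (hU : ∀ i, IsLocalPreMoufangSet (rf i) (Uf i))
    {x : InvLim Xf φf} {g : Equiv.Perm (InvLim Xf φf)} (hg : g ∈ rootGroup Uf x) :
    PreservesRel (invLimSetoid Xf rf φf) g := by
  obtain ⟨u, hu, hgu⟩ := hg
  intro a b
  rw [invLimSetoid_r, invLimSetoid_r]
  refine forall_congr' fun i => ?_
  rw [hgu, hgu]
  exact (hU i).preserves _ _ (hu i) _ _

theorem apply_eq_self_of_mem_rootGroup (hU : ∀ i, IsLocalPreMoufangSet (rf i) (Uf i))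
    {x : InvLim Xf φf} {g : Equiv.Perm (InvLim Xf φf)} (hg : g ∈ rootGroup Uf x) : g x = x := by
  obtain ⟨u, hu, hgu⟩ := hg
  exact Subtype.ext <| funext fun i => (hgu x i).trans ((hU i).fixes _ _ (hu i))

/-- The unique root-group elements in the components are compatible with the transition maps,
because each transition map carries one of them to the other. -/
theorem existsUnique_mem_rootGroup_apply_eq [IsDirected I (· ≤ ·)]
    (hU : ∀ i, IsLocalPreMoufangSet (rf i) (Uf i))
    (hhom : ∀ (i j : I) (h : j ≤ i), IsLMSHom (rf i) (rf j) (Uf i) (Uf j) (φf i j h))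
    {x a b : InvLim Xf φf} (ha : ¬ (invLimSetoid Xf rf φf).r a x)
    (hb : ¬ (invLimSetoid Xf rf φf).r b x) :
    ∃! g : Equiv.Perm (InvLim Xf φf), g ∈ rootGroup Uf x ∧ g a = b := by
  have hrel := fun i j h => (hhom i j h).1
  choose u hu huniq using fun i => (hU i).lm1 (x.1 i) (a.1 i) (b.1 i)
    (mt (invLimSetoid_r_iff hrel i).2 ha) (mt (invLimSetoid_r_iff hrel i).2 hb)
  have hcompat : IsCompat φf u := by
    intro i j h p
    obtain ⟨v, hv, hvu⟩ := (hhom i j h).2 _ _ (hu i).1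
    rw [x.2] at hv
    have hvj : v = u j := huniq j v ⟨hv, by rw [← a.2 i j h, ← hvu, (hu i).2, b.2]⟩
    rw [hvu, hvj]
  refine ⟨compatPerm u hcompat, ⟨⟨u, fun i => (hu i).1, isInducedBy_compatPerm hcompat⟩,
    Subtype.ext <| funext fun i => (hu i).2⟩, ?_⟩
  rintro g ⟨⟨v, hv, hgv⟩, rfl⟩
  refine Equiv.ext fun p => Subtype.ext <| funext fun i => ?_
  rw [hgv, huniq i (v i) ⟨hv i, (hgv a i).symm⟩]
  rfl

theorem rel_apply_of_mem_rootGroup [IsDirected I (· ≤ ·)]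
    (hU : ∀ i, IsLocalPreMoufangSet (rf i) (Uf i))
    (hrel : ∀ (i j : I) (h : j ≤ i) (a b : Xf i),
      (rf i).r a b ↔ (rf j).r (φf i j h a) (φf i j h b))
    {x : InvLim Xf φf} {g h : Equiv.Perm (InvLim Xf φf)}
    (hg : g ∈ rootGroup Uf x) (hh : h ∈ rootGroup Uf x) {a : InvLim Xf φf}
    (hax : ¬ (invLimSetoid Xf rf φf).r a x) (hgh : (invLimSetoid Xf rf φf).r (g a) (h a))
    (b : InvLim Xf φf) : (invLimSetoid Xf rf φf).r (g b) (h b) := by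
  obtain ⟨u, hu, hgu⟩ := hg
  obtain ⟨v, hv, hhv⟩ := hh
  intro i
  have hghi := hgh i
  rw [hgu, hhv] at hghi ⊢
  exact (hU i).lm1'_sharp _ _ (hu i) _ (hv i) _ (mt (invLimSetoid_r_iff hrel i).2 hax) hghi _

/-- Componentwise (LM0) gives no compatible family, so the partner of `g` is produced by (LM1)
on the limit and compared with the componentwise partners through (LM1'). -/
theorem exists_mem_rootGroup_rel [IsDirected I (· ≤ ·)]
    (hU : ∀ i, IsLocalPreMoufangSet (rf i) (Uf i))
    (hhom : ∀ (i j : I) (h : j ≤ i), IsLMSHom (rf i) (rf j) (Uf i) (Uf j) (φf i j h))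
    {c d : InvLim Xf φf} (hcd : ¬ (invLimSetoid Xf rf φf).r c d)
    {x y : InvLim Xf φf} (hxy : (invLimSetoid Xf rf φf).r x y)
    {g : Equiv.Perm (InvLim Xf φf)} (hg : g ∈ rootGroup Uf x) :
    ∃ h ∈ rootGroup Uf y, ∀ b, (invLimSetoid Xf rf φf).r (g b) (h b) := by
  set R := invLimSetoid Xf rf φf
  have hrel := fun i j h => (hhom i j h).1
  have not_rel_y : ∀ {a}, ¬ R.r a x → ¬ R.r a y :=
    fun hax hay => hax (R.iseqv.trans hay (R.iseqv.symm hxy))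
  obtain ⟨a, hax⟩ := Setoid.exists_not_rel_of_not_rel R hcd x
  have hgax : ¬ R.r (g a) x := by
    rwa [← apply_eq_self_of_mem_rootGroup hU hg, ← preservesRel_of_mem_rootGroup hU hg]
  obtain ⟨h, ⟨hh, hha⟩, -⟩ :=
    existsUnique_mem_rootGroup_apply_eq hU hhom (not_rel_y hax) (not_rel_y hgax)
  refine ⟨h, hh, fun b i => ?_⟩
  obtain ⟨u, hu, hgu⟩ := hg
  obtain ⟨v, hv, hhv⟩ := hh
  obtain ⟨w, hw, hwu⟩ := (hU i).lm0 _ _ (hxy i) (u i) (hu i)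
  have hwa : (rf i).r (w (a.1 i)) (v i (a.1 i)) := by
    rw [← hhv, hha, hgu]
    exact (rf i).iseqv.symm (hwu _)
  rw [hgu, hhv]
  exact (rf i).iseqv.trans (hwu _) ((hU i).lm1'_sharp _ w hw (v i) (hv i) _
    (mt (invLimSetoid_r_iff hrel i).2 (not_rel_y hax)) hwa _)

theorem conj_mem_rootGroup (hU : ∀ i, IsLocalMoufangSet (rf i) (Uf i))
    {x y : InvLim Xf φf} {g k : Equiv.Perm (InvLim Xf φf)}
    (hg : g ∈ rootGroup Uf y) (hk : k ∈ rootGroup Uf x) :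
    g * k * g⁻¹ ∈ rootGroup Uf (g x) := by
  obtain ⟨u, hu, hgu⟩ := hg
  obtain ⟨v, hv, hkv⟩ := hk
  refine ⟨fun i => u i * v i * (u i)⁻¹, fun i => ?_, (hgu.mul hkv).mul hgu.inv⟩
  rw [hgu, ← (hU i).lm2 _ _ (Subgroup.mem_iSup_of_mem _ (hu i))]
  exact ⟨v i, hv i, rfl⟩

theorem isLocalMoufangSet_rootGroup [IsDirected I (· ≤ ·)]
    (hU : ∀ i, IsLocalMoufangSet (rf i) (Uf i))
    (hhom : ∀ (i j : I) (h : j ≤ i), IsLMSHom (rf i) (rf j) (Uf i) (Uf j) (φf i j h))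
    (hbig : ∃ a b c : InvLim Xf φf, ¬ (invLimSetoid Xf rf φf).r a b ∧
      ¬ (invLimSetoid Xf rf φf).r a c ∧ ¬ (invLimSetoid Xf rf φf).r b c) :
    IsLocalMoufangSet (invLimSetoid Xf rf φf) (rootGroup Uf) := by
  have hU' := fun i => (hU i).toIsLocalPreMoufangSet
  have ⟨_, _, _, hcd, _⟩ := hbig
  exact {
    big := hbig
    preserves := fun _ _ => preservesRel_of_mem_rootGroup hU'
    lm0 := fun _ _ hxy _ => exists_mem_rootGroup_rel hU' hhom hcd hxy
    fixes := fun _ _ => apply_eq_self_of_mem_rootGroup hU'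
    lm1 := fun _ _ _ => existsUnique_mem_rootGroup_apply_eq hU' hhom
    lm1'_trans := fun _ _ _ ha hb =>
      let ⟨g, ⟨hg, hgab⟩, _⟩ := existsUnique_mem_rootGroup_apply_eq hU' hhom ha hb
      ⟨g, hg, hgab ▸ (invLimSetoid Xf rf φf).iseqv.refl _⟩
    lm1'_sharp := fun _ _ hg _ hh _ =>
      rel_apply_of_mem_rootGroup hU' (fun i j h => (hhom i j h).1) hg hh
    lm2 := map_conj_eq_of_conj_mem fun _ _ hg _ _ hk => conj_mem_rootGroup hU hg hk }

theorem isLMSHom_proj [IsDirected I (· ≤ ·)]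
    (hrel : ∀ (i j : I) (h : j ≤ i) (a b : Xf i),
      (rf i).r a b ↔ (rf j).r (φf i j h a) (φf i j h b)) (j : I) :
    IsLMSHom (invLimSetoid Xf rf φf) (rf j) (rootGroup Uf) (Uf j) fun x => x.1 j :=
  ⟨fun _ _ => invLimSetoid_r_iff hrel j,
    fun _ _ ⟨u, hu, hgu⟩ => ⟨u j, hu j, fun p => hgu p j⟩⟩

end RootGroups

end InvLim

theorem statement10_general [IsDirected I (· ≤ ·)]
    (Xf : I → Type*) (rf : ∀ i, Setoid (Xf i))
    (Uf : ∀ i, Xf i → Subgroup (Equiv.Perm (Xf i)))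
    (φf : ∀ i j : I, j ≤ i → Xf i → Xf j)
    (hLMS : ∀ i, IsLocalMoufangSet (rf i) (Uf i))
    (hcomp : ∀ (i j k : I) (hji : j ≤ i) (hkj : k ≤ j) (x : Xf i),
      φf j k hkj (φf i j hji x) = φf i k (hkj.trans hji) x)
    (hhom : ∀ (i j : I) (h : j ≤ i), IsLMSHom (rf i) (rf j) (Uf i) (Uf j) (φf i j h))
    (hsurj : ∀ (i j : I) (h : j ≤ i), Function.Surjective (φf i j h))
    (f : ℕ → I) (hmono : Monotone f) (hcof : ∀ i : I, ∃ n : ℕ, i ≤ f n) :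
    (∀ j : I, Function.Surjective (fun x : InvLim Xf φf => x.1 j)) ∧
    (∃ a b c : InvLim Xf φf,
      ¬ (invLimSetoid Xf rf φf).r a b ∧ ¬ (invLimSetoid Xf rf φf).r a c ∧
      ¬ (invLimSetoid Xf rf φf).r b c) ∧
    (∃ W : InvLim Xf φf → Subgroup (Equiv.Perm (InvLim Xf φf)),
      IsLocalMoufangSet (invLimSetoid Xf rf φf) W ∧
      ∀ j : I, IsLMSHom (invLimSetoid Xf rf φf) (rf j) W (Uf j)
        (fun x => x.1 j)) := by
  have hproj := InvLim.surjective_proj hcomp hsurj hmono hcof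
  have hbig := exists_three_not_rel_of_surjective (r := invLimSetoid Xf rf φf)
    (fun a b hab => hab (f 0)) (hproj (f 0))
    (hLMS (f 0)).big
  exact ⟨hproj, hbig, InvLim.rootGroup Uf, InvLim.isLocalMoufangSet_rootGroup hLMS hhom hbig,
    InvLim.isLMSHom_proj fun i j h => (hhom i j h).1⟩

/-- for a surjective inverse system of local Moufang sets over a
directed set with a cofinal sequence, all projection maps from the inverse limit are
surjective; in particular the limit has more than two equivalence classes, and the
inverse limit exists as a local Moufang set (there are root groups on the limit set
making it a local Moufang set for which all projections are homomorphisms of local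
Moufang sets). -/
theorem statement10 [IsDirected I (· ≤ ·)]
    (Xf : I → Type*) (rf : ∀ i, Setoid (Xf i))
    (Uf : ∀ i, Xf i → Subgroup (Equiv.Perm (Xf i)))
    (φf : ∀ i j : I, j ≤ i → Xf i → Xf j)
    (hLMS : ∀ i, IsLocalMoufangSet (rf i) (Uf i))
    (hid : ∀ (i : I) (x : Xf i), φf i i le_rfl x = x)
    (hcomp : ∀ (i j k : I) (hji : j ≤ i) (hkj : k ≤ j) (x : Xf i),
      φf j k hkj (φf i j hji x) = φf i k (hkj.trans hji) x)
    (hhom : ∀ (i j : I) (h : j ≤ i), IsLMSHom (rf i) (rf j) (Uf i) (Uf j) (φf i j h))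
    (hsurj : ∀ (i j : I) (h : j ≤ i), Function.Surjective (φf i j h))
    (f : ℕ → I) (hmono : Monotone f) (hcof : ∀ i : I, ∃ n : ℕ, i ≤ f n) :
    (∀ j : I, Function.Surjective (fun x : InvLim Xf φf => x.1 j)) ∧
    (∃ a b c : InvLim Xf φf,
      ¬ (invLimSetoid Xf rf φf).r a b ∧ ¬ (invLimSetoid Xf rf φf).r a c ∧
      ¬ (invLimSetoid Xf rf φf).r b c) ∧
    (∃ W : InvLim Xf φf → Subgroup (Equiv.Perm (InvLim Xf φf)),
      IsLocalMoufangSet (invLimSetoid Xf rf φf) W ∧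
      ∀ j : I, IsLMSHom (invLimSetoid Xf rf φf) (rf j) W (Uf j)
        (fun x => x.1 j)) :=
  statement10_general Xf rf Uf φf hLMS hcomp hhom hsurj f hmono hcof
end
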